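/- arXiv:1606.03795 — 7 statements merged into one kernel-verified Lean document; each statement's English description precedes it below -/
import Mathlib

section
/- Fix E_p > 0. Let H_p be a Hermitian operator with spectral decomposition H_p = Σ_a λ_a Π_a (distinct real eigenvalues λ_a, pairwise orthogonal eigenprojections Π_a summing to the identity) having at least two distinct eigenvalues, let V, W be operators, and let P be an orthogonal projection such that Σ_a Π_a (V − W) Π_a P = 0. Define K(t) = (∫_0^t e^{i E_p H_p τ} (V − W) e^{−i E_p H_p τ} dτ) P. Then for every t ≥ 0: ‖K(t)‖ ≤ (2 / E_p) · Σ_{a ≠ a'} ‖V − W‖ / |λ_a − λ_{a'}|, where ‖·‖ is the operator norm and the sum runs over ordered pairs of distinct eigenvalue indices. -/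
/-- Operators on a fixed finite-dimensional complex Hilbert space. -/
noncomputable abbrev Op (n : ℕ) :=
  EuclideanSpace ℂ (Fin n) →L[ℂ] EuclideanSpace ℂ (Fin n)

/-
Because the spectral projections form a complete family of orthogonal idempotents,
`c ↦ ∑ₐ c a • Πₐ` is a continuous algebra map `(ι → ℂ) → Op n`, and continuous algebra maps
commute with `exp`; hence
`e^{iE_pτH_p} (V - W) e^{-iE_pτH_p} = ∑_{a,a'} e^{iE_p(λ_a - λ_{a'})τ} Πₐ (V - W) Π_{a'}`.
Integrating in `τ`, the diagonal terms sum to `t • ∑ₐ Πₐ (V - W) Πₐ P = 0`, each off-diagonal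
oscillatory integral has modulus at most `2 / (E_p |λ_a - λ_{a'}|)`, and projections have norm
at most one.
-/

open NormedSpace Finset
open Complex (I)
open scoped Complex

theorem sum_smul_mul_mul_sum_smul {ι R A : Type*} [Fintype ι] [CommSemiring R] [Semiring A]
    [Algebra R A] (e : ι → A) (x y : ι → R) (b : A) :
    (∑ i, x i • e i) * b * (∑ j, y j • e j) =
      ∑ q : ι × ι, (x q.1 * y q.2) • (e q.1 * b * e q.2) := by
  rw [sum_mul, sum_mul_sum, Fintype.sum_prod_type]
  simp only [smul_mul_assoc, mul_smul_comm, smul_smul, mul_comm (y _)]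

theorem intervalIntegral.integral_sum_cexp_mul_smul {κ E : Type*} [Fintype κ]
    [NormedAddCommGroup E] [NormedSpace ℂ E] [CompleteSpace E] (c : κ → ℂ) (m : κ → E) (a b : ℝ) :
    ∫ τ in a..b, ∑ q, cexp (c q * τ) • m q = ∑ q, (∫ τ in a..b, cexp (c q * τ)) • m q := by
  rw [intervalIntegral.integral_finsetSum fun q _ =>
    (by fun_prop : Continuous _).intervalIntegrable _ _]
  simp only [intervalIntegral.integral_smul_const]

namespace CompleteOrthogonalIdempotents

section Semiring

variable {ι R A : Type*} [Fintype ι] [CommSemiring R] [Semiring A] [Algebra R A] {e : ι → A}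

noncomputable def piAlgHom (he : CompleteOrthogonalIdempotents e) : (ι → R) →ₐ[R] A :=
  AlgHom.ofLinearMap (Fintype.linearCombination R e)
    (by simpa [Fintype.linearCombination_apply] using he.complete)
    (fun x y => by
      classical
      simp [Fintype.linearCombination_apply, sum_mul, mul_sum, smul_smul, mul_comm,
        he.toOrthogonalIdempotents.mul_eq])

theorem piAlgHom_apply (he : CompleteOrthogonalIdempotents e) (x : ι → R) :
    he.piAlgHom x = ∑ i, x i • e i :=
  Fintype.linearCombination_apply R e x

end Semiring

section NormedAlgebra

variable {ι A : Type*} [Fintype ι] [NormedRing A] [NormedAlgebra ℂ A] [Algebra ℚ A] {e : ι → A}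

theorem exp_sum_smul (he : CompleteOrthogonalIdempotents e) (c : ι → ℂ) :
    exp (∑ i, c i • e i) = ∑ i, cexp (c i) • e i := by
  have hcont : Continuous (he.piAlgHom (R := ℂ)) :=
    LinearMap.continuous_of_finiteDimensional (he.piAlgHom (R := ℂ)).toLinearMap
  rw [← he.piAlgHom_apply, ← map_exp _ hcont, he.piAlgHom_apply, Pi.exp_def, Complex.exp_eq_exp_ℂ]

theorem exp_smul_mul_mul_exp_neg_smul (he : CompleteOrthogonalIdempotents e) (lam : ι → ℂ)
    (z : ℂ) (b : A) :
    exp (z • ∑ i, lam i • e i) * b * exp ((-z) • ∑ i, lam i • e i) =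
      ∑ q : ι × ι, cexp (z * (lam q.1 - lam q.2)) • (e q.1 * b * e q.2) := by
  simp only [smul_sum, smul_smul, he.exp_sum_smul, sum_smul_mul_mul_sum_smul, ← Complex.exp_add]
  congr! 3
  ring

theorem integral_exp_smul_mul_mul_exp_neg_smul [CompleteSpace A]
    (he : CompleteOrthogonalIdempotents e) (lam : ι → ℝ) (s : ℝ) (b : A) (t₀ t : ℝ) :
    ∫ τ in t₀..t, exp ((I * s * τ) • ∑ i, (lam i : ℂ) • e i) * b *
        exp ((-(I * s * τ)) • ∑ i, (lam i : ℂ) • e i) =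
      ∑ q : ι × ι,
        (∫ τ in t₀..t, cexp (I * ↑(s * (lam q.1 - lam q.2)) * τ)) • (e q.1 * b * e q.2) := by
  rw [← intervalIntegral.integral_sum_cexp_mul_smul]
  refine intervalIntegral.integral_congr fun τ _ => ?_
  simp only [he.exp_smul_mul_mul_exp_neg_smul]
  congr! 3
  push_cast
  ring

end NormedAlgebra

end CompleteOrthogonalIdempotents

theorem norm_integral_cexp_I_mul_le {ω : ℝ} (hω : ω ≠ 0) (a b : ℝ) :
    ‖∫ τ in a..b, cexp (I * ω * τ)‖ ≤ 2 / |ω| := by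
  have hc : I * ω ≠ 0 := mul_ne_zero Complex.I_ne_zero (Complex.ofReal_ne_zero.mpr hω)
  have hunit : ∀ τ : ℝ, ‖cexp (I * ω * τ)‖ = 1 := fun τ => by
    rw [Complex.norm_exp]; simp
  rw [integral_exp_mul_complex hc, norm_div, norm_mul, Complex.norm_I, one_mul, Complex.norm_real,
    Real.norm_eq_abs]
  gcongr
  calc _ ≤ ‖cexp (I * ω * b)‖ + ‖cexp (I * ω * a)‖ := norm_sub_le _ _
    _ = 2 := by rw [hunit, hunit]; norm_num

theorem Fintype.sum_prod_eq_sum_diag_add_sum_offDiag {ι M : Type*} [Fintype ι] [DecidableEq ι]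
    [AddCommMonoid M] (f : ι × ι → M) :
    ∑ q, f q = ∑ i, f (i, i) + ∑ q ∈ univ.filter (fun q : ι × ι => q.1 ≠ q.2), f q := by
  rw [← sum_filter_not_add_sum_filter univ (fun q : ι × ι => q.1 ≠ q.2)]
  simp only [ne_eq, not_not]
  rw [← sum_diag, diag_eq_filter, univ_product_univ]

theorem IsStarProjection.norm_mul_le_left {E : Type*} [NonUnitalNormedRing E] [StarRing E]
    [CStarRing E] {p : E} (hp : IsStarProjection p) (x : E) : ‖p * x‖ ≤ ‖x‖ :=
  (norm_mul_le p x).trans (mul_le_of_le_one_left (norm_nonneg x) (hp.norm_le p))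

theorem IsStarProjection.norm_mul_le_right {E : Type*} [NonUnitalNormedRing E] [StarRing E]
    [CStarRing E] {p : E} (hp : IsStarProjection p) (x : E) : ‖x * p‖ ≤ ‖x‖ :=
  (norm_mul_le x p).trans (mul_le_of_le_one_right (norm_nonneg x) (hp.norm_le p))

theorem K_norm_bound_general
    {n : ℕ} {ι : Type} [Fintype ι] [DecidableEq ι]
    (Ep : ℝ) (hEp : 0 < Ep)
    -- spectral decomposition of the penalty Hamiltonian, with ≥ 2 eigenvalues
    (lam : ι → ℝ) (hlam : Function.Injective lam)
    (Proj : ι → Op n)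
    (hProjSA : ∀ a, IsSelfAdjoint (Proj a))
    (hProjOrth : ∀ a b, a ≠ b → Proj a * Proj b = 0)
    (hProjSum : ∑ a, Proj a = 1)
    (Hp : Op n)
    (hHp : Hp = ∑ a, (lam a : ℂ) • Proj a)
    -- the operators V, W and the projection P
    (V W : Op n)
    (P : Op n) (hPidem : P * P = P) (hPSA : IsSelfAdjoint P)
    -- the condition Σ_a Π_a (V-W) Π_a P = 0
    (hcond : (∑ a, Proj a * (V - W) * Proj a) * P = 0)
    (K : ℝ → Op n)
    (hK : ∀ t : ℝ, K t =
      (∫ τ in (0:ℝ)..t,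
        NormedSpace.exp ((Complex.I * (Ep : ℂ) * (τ : ℂ)) • Hp) * (V - W) *
          NormedSpace.exp ((-(Complex.I * (Ep : ℂ) * (τ : ℂ))) • Hp)) * P) :
    ∀ t : ℝ, 0 ≤ t →
      ‖K t‖ ≤ (2 / Ep) *
        ∑ p ∈ Finset.univ.filter (fun p : ι × ι => p.1 ≠ p.2),
          ‖V - W‖ / |lam p.1 - lam p.2| := by
  intro t _
  have hProj : CompleteOrthogonalIdempotents Proj :=
    CompleteOrthogonalIdempotents.iff_ortho_complete.mpr
      ⟨fun a b hab => hProjOrth a b hab, hProjSum⟩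
  set ω : ι × ι → ℝ := fun q => Ep * (lam q.1 - lam q.2) with hω
  have hKt : K t = ∑ q, (∫ τ in (0:ℝ)..t, cexp (I * ω q * τ)) •
      (Proj q.1 * (V - W) * Proj q.2 * P) := by
    rw [hK, hHp, hProj.integral_exp_smul_mul_mul_exp_neg_smul, sum_mul]
    exact sum_congr rfl fun q _ => smul_mul_assoc _ _ _
  have hdiag : ∑ a, (∫ τ in (0:ℝ)..t, cexp (I * ω (a, a) * τ)) •
      (Proj a * (V - W) * Proj a * P) = 0 := by
    simp [hω, ← smul_sum, ← sum_mul, hcond]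
  have hoff : ∀ q ∈ univ.filter (fun q : ι × ι => q.1 ≠ q.2),
      ‖(∫ τ in (0:ℝ)..t, cexp (I * ω q * τ)) • (Proj q.1 * (V - W) * Proj q.2 * P)‖ ≤
        2 / Ep * (‖V - W‖ / |lam q.1 - lam q.2|) := by
    intro q hq
    have hωq : ω q ≠ 0 := mul_ne_zero hEp.ne' (sub_ne_zero.mpr (hlam.ne (mem_filter.mp hq).2))
    have hMq : ‖Proj q.1 * (V - W) * Proj q.2 * P‖ ≤ ‖V - W‖ :=
      (IsStarProjection.norm_mul_le_right ⟨hPidem, hPSA⟩ _).trans <|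
      (IsStarProjection.norm_mul_le_right ⟨hProj.idem q.2, hProjSA q.2⟩ _).trans <|
      IsStarProjection.norm_mul_le_left ⟨hProj.idem q.1, hProjSA q.1⟩ _
    calc _ ≤ 2 / |ω q| * ‖V - W‖ := by
          rw [norm_smul]
          exact mul_le_mul (norm_integral_cexp_I_mul_le hωq 0 t) hMq (norm_nonneg _) (by positivity)
      _ = _ := by rw [hω, abs_mul, abs_of_pos hEp]; ring
  rw [hKt, Fintype.sum_prod_eq_sum_diag_add_sum_offDiag, hdiag, zero_add, mul_sum]
  exact (norm_sum_le _ _).trans (sum_le_sum hoff)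

/-- The finite-penalty bound on `K(t)` (Eq. (5b)):
`‖K(t)‖ ≤ (2/E_p) Σ_{a≠a'} ‖V-W‖ / |λ_a - λ_{a'}|`. -/
theorem K_norm_bound
    {n : ℕ} {ι : Type} [Fintype ι] [DecidableEq ι]
    (Ep : ℝ) (hEp : 0 < Ep)
    -- spectral decomposition of the penalty Hamiltonian, with ≥ 2 eigenvalues
    (lam : ι → ℝ) (hlam : Function.Injective lam)
    (hcard : 2 ≤ Fintype.card ι)
    (Proj : ι → Op n)
    (hProjSA : ∀ a, IsSelfAdjoint (Proj a))
    (hProjIdem : ∀ a, Proj a * Proj a = Proj a)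
    (hProjOrth : ∀ a b, a ≠ b → Proj a * Proj b = 0)
    (hProjSum : ∑ a, Proj a = 1)
    (Hp : Op n) (hHpSA : IsSelfAdjoint Hp)
    (hHp : Hp = ∑ a, (lam a : ℂ) • Proj a)
    -- the operators V, W and the projection P
    (V W : Op n)
    (P : Op n) (hPidem : P * P = P) (hPSA : IsSelfAdjoint P)
    -- the condition Σ_a Π_a (V-W) Π_a P = 0
    (hcond : (∑ a, Proj a * (V - W) * Proj a) * P = 0)
    (K : ℝ → Op n)
    (hK : ∀ t : ℝ, K t =
      (∫ τ in (0:ℝ)..t,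
        NormedSpace.exp ((Complex.I * (Ep : ℂ) * (τ : ℂ)) • Hp) * (V - W) *
          NormedSpace.exp ((-(Complex.I * (Ep : ℂ) * (τ : ℂ))) • Hp)) * P) :
    ∀ t : ℝ, 0 ≤ t →
      ‖K t‖ ≤ (2 / Ep) *
        ∑ p ∈ Finset.univ.filter (fun p : ι × ι => p.1 ≠ p.2),
          ‖V - W‖ / |lam p.1 - lam p.2| :=
  K_norm_bound_general Ep hEp lam hlam Proj hProjSA hProjOrth hProjSum Hp hHp V W P hPidem hPSA
    hcond K hK
end

section
/- Let h be a Hermitian operator, p an orthogonal projection, and σ a Hermitian unitary involution (σ = σ†, σ² = I). Assume [h, p] = 0 and [σ h σ, p] = 0. Assume further that h and σ h σ share no eigenvalue on the support of p, i.e., there is no real number e for which there exist nonzero vectors v, w in the range of p with h v = e v and (σ h σ) w = e w. Then for every spectral projection Π of h (the orthogonal projection onto an eigenspace of h), Π σ Π p = 0; in particular Σ_a Π_a σ Π_a p = 0 where the Π_a are all the eigenprojections of h. -/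
open Matrix

private lemma ext_mulVec {n : ℕ} {A B : Matrix (Fin n) (Fin n) ℂ}
    (hAB : ∀ v, A.mulVec v = B.mulVec v) : A = B := by
  ext i j
  have := congrFun (hAB (Pi.single j 1)) i
  simpa using this

private lemma commute_proj {n : ℕ} (g p Pr : Matrix (Fin n) (Fin n) ℂ) (e : ℝ)
    (hpH : p.IsHermitian) (hPrH : Pr.IsHermitian)
    (hgp : g * p = p * g)
    (heig : g * Pr = (e : ℂ) • Pr)
    (hfull : ∀ v, g.mulVec v = (e : ℂ) • v → Pr.mulVec v = v) :
    Pr * p = p * Pr := by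
  have key : Pr * (p * Pr) = p * Pr := by
    apply ext_mulVec
    intro v
    rw [← Matrix.mulVec_mulVec]
    apply hfull
    rw [Matrix.mulVec_mulVec, ← Matrix.mul_assoc, hgp, Matrix.mul_assoc, heig,
      Matrix.mul_smul, Matrix.smul_mulVec]
  have key' : Pr * p * Pr = p * Pr := by rw [Matrix.mul_assoc]; exact key
  have hadj := congrArg Matrix.conjTranspose key'
  have hadj2 : Pr * (p * Pr) = Pr * p := by
    simpa [Matrix.conjTranspose_mul, hPrH.eq, hpH.eq, Matrix.mul_assoc] using hadj
  exact hadj2.symm.trans key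

/-- Simplified sufficient condition (Condition 1): if `h` and `σhσ` share no eigenvalue
on the support of `p`, then every spectral projection `Π` of `h` satisfies `ΠσΠp = 0`,
and hence `Σ_a Π_a σ Π_a p = 0`. -/
theorem condition_one_sufficient
    {n : ℕ}
    (h p σ : Matrix (Fin n) (Fin n) ℂ)
    (hh : h.IsHermitian)
    (hpidem : p * p = p) (hpH : p.IsHermitian)
    (hσH : σ.IsHermitian) (hσ2 : σ * σ = 1)
    (hcomm1 : h * p = p * h)
    (hcomm2 : (σ * h * σ) * p = p * (σ * h * σ))
    -- `h` and `σhσ` share no eigenvalue on the support of `p`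
    (hnoshare : ¬ ∃ (e : ℝ) (v w : Fin n → ℂ), v ≠ 0 ∧ w ≠ 0 ∧
      p.mulVec v = v ∧ p.mulVec w = w ∧
      h.mulVec v = (e : ℂ) • v ∧ (σ * h * σ).mulVec w = (e : ℂ) • w) :
    -- every spectral projection of h kills σ on the support of p
    (∀ (e : ℝ) (Pr : Matrix (Fin n) (Fin n) ℂ),
      Pr.IsHermitian → Pr * Pr = Pr → h * Pr = (e : ℂ) • Pr →
      (∀ v : Fin n → ℂ, h.mulVec v = (e : ℂ) • v → Pr.mulVec v = v) →
      Pr * σ * Pr * p = 0) ∧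
    -- in particular, for any complete family of eigenprojections of h
    (∀ (ι : Type) [Fintype ι] (lam : ι → ℝ) (Prs : ι → Matrix (Fin n) (Fin n) ℂ),
      (∀ a, (Prs a).IsHermitian) → (∀ a, Prs a * Prs a = Prs a) →
      (∀ a, h * Prs a = (lam a : ℂ) • Prs a) →
      (∀ a, ∀ v : Fin n → ℂ, h.mulVec v = (lam a : ℂ) • v → (Prs a).mulVec v = v) →
      (∑ a, Prs a * σ * Prs a) * p = 0) := by
  have main : ∀ (e : ℝ) (Pr : Matrix (Fin n) (Fin n) ℂ),
      Pr.IsHermitian → Pr * Pr = Pr → h * Pr = (e : ℂ) • Pr →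
      (∀ v : Fin n → ℂ, h.mulVec v = (e : ℂ) • v → Pr.mulVec v = v) →
      Pr * σ * Pr * p = 0 := by
    intro e Pr hPrH hPridem hPre hPrfull
    by_contra hne
    -- pick a vector where it is nonzero
    have : ∃ u, (Pr * σ * Pr * p).mulVec u ≠ 0 := by
      by_contra hc
      push_neg at hc
      exact hne (ext_mulVec (fun v => by rw [hc v]; simp))
    obtain ⟨u, hu⟩ := this
    set g := σ * h * σ with hg
    set Pr' := σ * Pr * σ with hPr'
    -- commutation of p with Pr
    have hPrp : Pr * p = p * Pr :=
      commute_proj h p Pr e hpH hPrH hcomm1 hPre hPrfull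
    -- Pr' facts
    have hPr'H : Pr'.IsHermitian := by
      unfold Pr'
      unfold Matrix.IsHermitian
      rw [Matrix.conjTranspose_mul, Matrix.conjTranspose_mul, hσH.eq, hPrH.eq, Matrix.mul_assoc]
    have hPr'e : g * Pr' = (e : ℂ) • Pr' := by
      unfold g Pr'
      calc σ * h * σ * (σ * Pr * σ) = σ * h * (σ * σ) * Pr * σ := by
            simp only [Matrix.mul_assoc]
        _ = σ * (h * Pr) * σ := by rw [hσ2]; simp only [Matrix.mul_assoc, Matrix.one_mul]
        _ = (e : ℂ) • (σ * Pr * σ) := by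
            rw [hPre, Matrix.mul_smul, Matrix.smul_mul]
    have hPr'full : ∀ v, g.mulVec v = (e : ℂ) • v → Pr'.mulVec v = v := by
      intro v hv
      have h1 : h.mulVec (σ.mulVec v) = (e : ℂ) • σ.mulVec v := by
        have : (σ * g).mulVec v = σ.mulVec ((e : ℂ) • v) := by
          rw [← Matrix.mulVec_mulVec, hv]
        have h2 : σ * g = h * σ := by
          unfold g
          calc σ * (σ * h * σ) = (σ * σ) * h * σ := by simp only [Matrix.mul_assoc]
            _ = h * σ := by rw [hσ2, Matrix.one_mul]
        rw [h2] at this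
        rw [Matrix.mulVec_mulVec, this, Matrix.mulVec_smul]
      have h3 := hPrfull _ h1
      have h4 := congrArg σ.mulVec h3
      rw [Matrix.mulVec_mulVec, Matrix.mulVec_mulVec, Matrix.mulVec_mulVec, hσ2, Matrix.one_mulVec] at h4
      exact h4
    have hPr'p : Pr' * p = p * Pr' :=
      commute_proj g p Pr' e hpH hPr'H hcomm2 hPr'e hPr'full
    -- the two eigenvectors
    set v := (Pr * p).mulVec u with hvdef
    set w := (Pr' * Pr * p).mulVec u with hwdef
    have hvne : v ≠ 0 := by
      intro hv0
      apply hu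
      have : Pr * σ * Pr * p = (Pr * σ) * (Pr * p) := by simp only [Matrix.mul_assoc]
      rw [this, ← Matrix.mulVec_mulVec, ← hvdef, hv0, Matrix.mulVec_zero]
    have hwne : w ≠ 0 := by
      intro hw0
      apply hu
      have h5 : σ.mulVec w = (Pr * σ * Pr * p).mulVec u := by
        have hm : σ * (Pr' * Pr * p) = Pr * σ * Pr * p := by
          show σ * (σ * Pr * σ * Pr * p) = Pr * σ * Pr * p
          calc σ * (σ * Pr * σ * Pr * p) = (σ * σ) * Pr * σ * Pr * p := by
                simp only [Matrix.mul_assoc]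
            _ = Pr * σ * Pr * p := by rw [hσ2, Matrix.one_mul]
        rw [hwdef, Matrix.mulVec_mulVec, hm]
      rw [hw0, Matrix.mulVec_zero] at h5
      exact h5.symm
    have hpv : p.mulVec v = v := by
      rw [hvdef, Matrix.mulVec_mulVec, ← Matrix.mul_assoc, ← hPrp, Matrix.mul_assoc, hpidem]
    have hpw : p.mulVec w = w := by
      have hm : p * (Pr' * Pr * p) = Pr' * Pr * p :=
        calc p * (Pr' * Pr * p) = (p * Pr') * Pr * p := by simp only [Matrix.mul_assoc]
          _ = Pr' * (p * Pr) * p := by rw [← hPr'p]; simp only [Matrix.mul_assoc]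
          _ = Pr' * Pr * (p * p) := by rw [← hPrp]; simp only [Matrix.mul_assoc]
          _ = Pr' * Pr * p := by rw [hpidem]
      rw [hwdef, Matrix.mulVec_mulVec, hm]
    have hhv : h.mulVec v = (e : ℂ) • v := by
      rw [hvdef, Matrix.mulVec_mulVec, ← Matrix.mul_assoc, hPre, Matrix.smul_mul,
        Matrix.smul_mulVec]
    have hgw : g.mulVec w = (e : ℂ) • w := by
      rw [hwdef, Matrix.mulVec_mulVec, ← Matrix.mul_assoc, ← Matrix.mul_assoc, hPr'e,
        Matrix.smul_mul, Matrix.smul_mul, Matrix.smul_mulVec]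
    exact hnoshare ⟨e, v, w, hvne, hwne, hpv, hpw, hhv, hgw⟩
  refine ⟨main, ?_⟩
  intro ι _ lam Prs hH hidem heig hfull
  rw [Finset.sum_mul]
  refine Finset.sum_eq_zero fun a _ => ?_
  exact main (lam a) (Prs a) (hH a) (hidem a) (heig a) (fun v => hfull a v)
end

section
/- Let S_1, …, S_m be pairwise commuting Hermitian unitary involutions, let p be an orthogonal projection with S_i p = p for every i, and let σ be a Hermitian unitary involution such that for each i either σ S_i σ = S_i or σ S_i σ = −S_i; write a_i = 0 in the first case and a_i = 1 in the second. Let α_1, …, α_m be real numbers and h = Σ_i α_i S_i. Then: (1) h p = (Σ_i α_i) p; (2) (σ h σ) p = (Σ_i (−1)^{a_i} α_i) p; and (3) if Σ_i α_i ≠ Σ_i (−1)^{a_i} α_i, then for every spectral projection Π of h (the orthogonal projection onto an eigenspace of h), Π σ Π p = 0. -/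
/-- Stabilizer penalty Hamiltonians: for `h = Σ_i α_i S_i` with the `S_i` pairwise
commuting Hermitian involutions fixing `p`, and `σ` (anti)commuting with each `S_i`:
(1) `hp = (Σ α_i) p`; (2) `σhσ p = (Σ (-1)^{a_i} α_i) p`; (3) if the two sums differ,
every spectral projection `Π` of `h` satisfies `ΠσΠp = 0`. -/
theorem stabilizer_penalty_condition
    {n : ℕ} {ι : Type} [Fintype ι]
    (S : ι → Matrix (Fin n) (Fin n) ℂ)
    (hSH : ∀ i, (S i).IsHermitian)
    (hSinv : ∀ i, S i * S i = 1)
    (hScomm : ∀ i j, S i * S j = S j * S i)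
    (p : Matrix (Fin n) (Fin n) ℂ)
    (hpidem : p * p = p) (hpH : p.IsHermitian)
    (hSp : ∀ i, S i * p = p)
    (σ : Matrix (Fin n) (Fin n) ℂ)
    (hσH : σ.IsHermitian) (hσ2 : σ * σ = 1)
    (a : ι → ℕ)
    (hσS : ∀ i, (a i = 0 ∧ σ * S i * σ = S i) ∨ (a i = 1 ∧ σ * S i * σ = -(S i)))
    (α : ι → ℝ)
    (h : Matrix (Fin n) (Fin n) ℂ)
    (hdef : h = ∑ i, (α i : ℂ) • S i) :
    h * p = ((∑ i, α i : ℝ) : ℂ) • p ∧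
    (σ * h * σ) * p = ((∑ i, (-1 : ℝ) ^ (a i) * α i : ℝ) : ℂ) • p ∧
    ((∑ i, α i) ≠ (∑ i, (-1 : ℝ) ^ (a i) * α i) →
      ∀ (e : ℝ) (Pr : Matrix (Fin n) (Fin n) ℂ),
        Pr.IsHermitian → Pr * Pr = Pr → h * Pr = (e : ℂ) • Pr →
        (∀ v : Fin n → ℂ, h.mulVec v = (e : ℂ) • v → Pr.mulVec v = v) →
        Pr * σ * Pr * p = 0) := by

  have hp1 : h * p = ((∑ i, α i : ℝ) : ℂ) • p := by
    rw [hdef, Finset.sum_mul]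
    push_cast
    rw [Finset.sum_smul]
    exact Finset.sum_congr rfl fun i _ => by rw [smul_mul_assoc, hSp i]
  have hp2 : (σ * h * σ) * p = ((∑ i, (-1 : ℝ) ^ (a i) * α i : ℝ) : ℂ) • p := by
    have h1 : σ * h * σ * p = ∑ i, (α i : ℂ) • (σ * S i * σ * p) := by
      rw [hdef]
      simp only [Finset.mul_sum, Finset.sum_mul, Matrix.mul_smul, Matrix.smul_mul]
    rw [h1]
    push_cast
    rw [Finset.sum_smul]
    refine Finset.sum_congr rfl fun i _ => ?_
    rcases hσS i with ⟨ha, he⟩ | ⟨ha, he⟩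
    · rw [he, hSp i, ha]
      simp
    · rw [he, Matrix.neg_mul, hSp i, ha]
      simp [smul_smul]
  refine ⟨hp1, hp2, ?_⟩
  intro hne e Pr hPrH hPr2 hPrEig heig
  set c1 : ℂ := ((∑ i, α i : ℝ) : ℂ) with hc1
  set c2 : ℂ := ((∑ i, (-1 : ℝ) ^ (a i) * α i : ℝ) : ℂ) with hc2
  have hc12 : c1 ≠ c2 := fun hEq => hne (Complex.ofReal_injective hEq)
  have hH : h.IsHermitian := by
    unfold Matrix.IsHermitian
    rw [hdef]
    simp [Matrix.conjTranspose_sum, Matrix.conjTranspose_smul,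
      fun i => (hSH i).eq, Complex.star_def, Complex.conj_ofReal]
  have Prh : Pr * h = (e : ℂ) • Pr := by
    have h2 := congrArg Matrix.conjTranspose hPrEig
    simpa [Matrix.conjTranspose_mul, hH.eq, hPrH.eq, Matrix.conjTranspose_smul,
      Complex.star_def, Complex.conj_ofReal] using h2
  have hσp : h * (σ * p) = c2 • (σ * p) := by
    have h3 := congrArg (fun M => σ * M) hp2
    simp only [← mul_assoc, hσ2, one_mul, Matrix.mul_smul] at h3
    rw [mul_assoc] at h3
    exact h3
  have key2 : (e : ℂ) • (Pr * (σ * p)) = c2 • (Pr * (σ * p)) := by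
    calc (e : ℂ) • (Pr * (σ * p)) = ((e : ℂ) • Pr) * (σ * p) := by rw [Matrix.smul_mul]
      _ = Pr * h * (σ * p) := by rw [Prh]
      _ = Pr * (h * (σ * p)) := by rw [mul_assoc]
      _ = Pr * (c2 • (σ * p)) := by rw [hσp]
      _ = c2 • (Pr * (σ * p)) := by rw [Matrix.mul_smul]
  have key1 : (e : ℂ) • (Pr * p) = c1 • (Pr * p) := by
    calc (e : ℂ) • (Pr * p) = ((e : ℂ) • Pr) * p := by rw [Matrix.smul_mul]
      _ = Pr * h * p := by rw [Prh]
      _ = Pr * (h * p) := by rw [mul_assoc]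
      _ = Pr * (c1 • p) := by rw [hp1]
      _ = c1 • (Pr * p) := by rw [Matrix.mul_smul]
  by_cases hcase : (e : ℂ) = c1
  · have hPp : Pr * p = p := by
      ext i j
      have hv : h.mulVec (fun k => p k j) = (e : ℂ) • (fun k => p k j) := by
        funext i'
        have h4 : (h * p) i' j = (c1 • p) i' j := by rw [hp1]
        simp only [Matrix.mul_apply, Matrix.smul_apply, smul_eq_mul] at h4
        simp only [Matrix.mulVec, dotProduct, Pi.smul_apply, smul_eq_mul]
        rw [h4, hcase]
      have h5 := heig _ hv
      have h6 := congrFun h5 i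
      simp only [Matrix.mulVec, dotProduct] at h6
      simpa [Matrix.mul_apply] using h6
    have hPσp : Pr * (σ * p) = 0 := by
      have hne2 : (e : ℂ) ≠ c2 := hcase ▸ hc12
      have h7 : ((e : ℂ) - c2) • (Pr * (σ * p)) = 0 := by
        rw [sub_smul, key2, sub_self]
      exact (smul_eq_zero.mp h7).resolve_left (sub_ne_zero.mpr hne2)
    calc Pr * σ * Pr * p = Pr * σ * (Pr * p) := by rw [mul_assoc]
      _ = Pr * (σ * p) := by rw [hPp, mul_assoc]
      _ = 0 := hPσp
  · have hPp : Pr * p = 0 := by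
      have h7 : ((e : ℂ) - c1) • (Pr * p) = 0 := by
        rw [sub_smul, key1, sub_self]
      exact (smul_eq_zero.mp h7).resolve_left (sub_ne_zero.mpr hcase)
    rw [mul_assoc, hPp, mul_zero]
end

section
/- Work with complex matrices indexed by the sum type (A × B) ⊕ K for finite types A, B, K, and let P_C be the orthogonal projection onto the (A × B)-coordinates (the codespace C ≅ ℂ^A ⊗ ℂ^B). For each j in a finite set, let E_j be a matrix on (A × B) ⊕ K and G_j a matrix on A such that P_C E_j P_C = P_C · ι(G_j ⊗ I_B) · P_C, where G_j ⊗ I_B is the Kronecker product and ι denotes extension by zero to the K-block. Then for any vectors ψ_A ∈ ℂ^A and ψ_B ∈ ℂ^B, letting ψ̄ ∈ ℂ^{(A×B)⊕K} be the extension by zero of the tensor product ψ_A ⊗ ψ_B, one has: P_C (Σ_j E_j ψ̄ ψ̄† E_j†) P_C = ι( (Σ_j G_j ψ_A ψ_A† G_j†) ⊗ (ψ_B ψ_B†) ), i.e., the projection of the channel output onto the codespace is a product state whose B-factor is the original state ψ_B ψ_B† on the information subsystem. -/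
open scoped Kronecker Matrix

lemma kron_conjT {A B : Type} [Fintype A] [Fintype B] (M : Matrix A A ℂ) (N : Matrix B B ℂ) :
    (M ⊗ₖ N)ᴴ = Mᴴ ⊗ₖ Nᴴ := by
  ext i j
  simp [Matrix.conjTranspose_apply, Matrix.kroneckerMap_apply, mul_comm]

lemma sum_kron {A B J : Type} [Fintype A] [Fintype B] [Fintype J]
    (M : J → Matrix A A ℂ) (N : Matrix B B ℂ) :
    (∑ j, M j) ⊗ₖ N = ∑ j, (M j) ⊗ₖ N := by
  ext i k
  simp [Matrix.sum_apply, Matrix.kroneckerMap_apply, Finset.sum_mul]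

/-- Subsystem error detection: if `P_C E_j P_C = P_C (G_j ⊗ I_B) P_C` for each error
`E_j`, then the projection onto the codespace of the channel output on an encoded
product state `ψ_A ⊗ ψ_B` is `(Σ_j G_j ψ_A ψ_A† G_j†) ⊗ (ψ_B ψ_B†)`: the information
subsystem `B` is untouched. -/
theorem subsystem_error_detection
    {A B K J : Type} [Fintype A] [Fintype B] [Fintype K] [Fintype J]
    [DecidableEq A] [DecidableEq B] [DecidableEq K]
    (E : J → Matrix ((A × B) ⊕ K) ((A × B) ⊕ K) ℂ)
    (G : J → Matrix A A ℂ)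
    (PC : Matrix ((A × B) ⊕ K) ((A × B) ⊕ K) ℂ)
    (hPC : PC = Matrix.fromBlocks 1 0 0 0)
    (hdetect : ∀ j, PC * E j * PC =
      PC * Matrix.fromBlocks ((G j) ⊗ₖ (1 : Matrix B B ℂ)) 0 0 0 * PC)
    (ψA : A → ℂ) (ψB : B → ℂ)
    (ψbar : (A × B) ⊕ K → ℂ)
    (hψbar : ψbar = Sum.elim (fun ab => ψA ab.1 * ψB ab.2) 0) :
    PC * (∑ j, E j * Matrix.vecMulVec ψbar (star ψbar) * (E j)ᴴ) * PC =
      Matrix.fromBlocks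
        ((∑ j, G j * Matrix.vecMulVec ψA (star ψA) * (G j)ᴴ) ⊗ₖ
          Matrix.vecMulVec ψB (star ψB)) 0 0 0 := by
  set ρA := Matrix.vecMulVec ψA (star ψA) with hρA
  set ρB := Matrix.vecMulVec ψB (star ψB) with hρB
  -- the density matrix of ψbar is block-diagonal kron
  have hM : Matrix.vecMulVec ψbar (star ψbar) =
      Matrix.fromBlocks (ρA ⊗ₖ ρB) 0 0 0 := by
    subst hψbar
    ext i j
    rcases i with i | i <;> rcases j with j | j <;>
      simp [Matrix.vecMulVec_apply, Matrix.kroneckerMap_apply, hρA, hρB, Pi.star_apply,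
        star_mul'] <;> ring
  set M := Matrix.vecMulVec ψbar (star ψbar)
  -- PC sandwiches
  have hPM : ∀ (X : Matrix (A × B) (A × B) ℂ),
      PC * Matrix.fromBlocks X 0 0 0 * PC = Matrix.fromBlocks X 0 0 0 := by
    intro X
    simp [hPC, Matrix.fromBlocks_multiply]
  have hPCH : PCᴴ = PC := by
    simp [hPC, Matrix.fromBlocks_conjTranspose]
  have hPP : ∀ (X : Matrix ((A × B) ⊕ K) ((A × B) ⊕ K) ℂ), PC * (PC * X) = PC * X := by
    intro X
    rw [← mul_assoc]
    congr 1
    simp [hPC, Matrix.fromBlocks_multiply]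
  have key : ∀ j, PC * (E j * M * (E j)ᴴ) * PC =
      Matrix.fromBlocks ((G j * ρA * (G j)ᴴ) ⊗ₖ ρB) 0 0 0 := by
    intro j
    have hEH : PC * (E j)ᴴ * PC =
        PC * Matrix.fromBlocks ((G j)ᴴ ⊗ₖ (1 : Matrix B B ℂ)) 0 0 0 * PC := by
      have := congrArg Matrix.conjTranspose (hdetect j)
      simpa [Matrix.conjTranspose_mul, hPCH, Matrix.fromBlocks_conjTranspose,
        kron_conjT, mul_assoc] using this
    rw [hM]
    calc PC * (E j * Matrix.fromBlocks (ρA ⊗ₖ ρB) 0 0 0 * (E j)ᴴ) * PC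
        = (PC * E j * PC) * Matrix.fromBlocks (ρA ⊗ₖ ρB) 0 0 0 *
            (PC * (E j)ᴴ * PC) := by
          rw [show Matrix.fromBlocks (ρA ⊗ₖ ρB) 0 0 (0 : Matrix K K ℂ) =
              PC * Matrix.fromBlocks (ρA ⊗ₖ ρB) 0 0 0 * PC from (hPM _).symm]
          simp only [mul_assoc, hPP]
      _ = Matrix.fromBlocks ((G j) ⊗ₖ (1 : Matrix B B ℂ)) 0 0 0 *
            Matrix.fromBlocks (ρA ⊗ₖ ρB) 0 0 0 *
            Matrix.fromBlocks ((G j)ᴴ ⊗ₖ (1 : Matrix B B ℂ)) 0 0 0 := by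
          rw [hdetect j, hEH, hPM, hPM]
      _ = Matrix.fromBlocks ((G j * ρA * (G j)ᴴ) ⊗ₖ ρB) 0 0 0 := by
          simp only [Matrix.fromBlocks_multiply, Matrix.mul_zero, Matrix.zero_mul,
            add_zero, zero_add, ← Matrix.mul_kronecker_mul, Matrix.mul_one, Matrix.one_mul]
  calc PC * (∑ j, E j * M * (E j)ᴴ) * PC
      = ∑ j, PC * (E j * M * (E j)ᴴ) * PC := by
        rw [Finset.mul_sum, Finset.sum_mul]
    _ = ∑ j, Matrix.fromBlocks ((G j * ρA * (G j)ᴴ) ⊗ₖ ρB) 0 0 0 := by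
        simp only [key]
    _ = Matrix.fromBlocks ((∑ j, G j * ρA * (G j)ᴴ) ⊗ₖ ρB) 0 0 0 := by
        rw [sum_kron]
        ext i k
        rcases i with i | i <;> rcases k with k | k <;>
          simp [Matrix.sum_apply]
end

section
/- Let A and B be finite types and let n be a finite type with |n| = |A|·|B|. Let U_enc be a unitary matrix of shape n × (A × B), and for matrices ρ, σ of shape n × n define d(ρ, σ) = (1/2)·‖ptr_A(U_enc† ρ U_enc) − ptr_A(U_enc† σ U_enc)‖₁, where ptr_A is the partial trace over A and ‖·‖₁ is the trace norm. Suppose u is a unitary matrix on n with U_enc† u U_enc = v ⊗ I_B (Kronecker product) for some unitary matrix v on A. Then for all Hermitian matrices ρ, σ: d(ρ, σ) ≤ (1/2)·‖ρ − u σ u†‖₁. -/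
open scoped Kronecker Matrix ComplexOrder

/-- The trace norm of a complex matrix: the trace of the positive semidefinite
square root of `Mᴴ M`. -/
noncomputable def traceNorm {m : Type} [Fintype m] [DecidableEq m]
    (M : Matrix m m ℂ) : ℝ :=
  ((Matrix.posSemidef_conjTranspose_mul_self M).1.eigenvectorUnitary.1 *
    Matrix.diagonal (((↑) : ℝ → ℂ) ∘ (√·) ∘ (Matrix.posSemidef_conjTranspose_mul_self M).1.eigenvalues) *
    (star (Matrix.posSemidef_conjTranspose_mul_self M).1.eigenvectorUnitary : Matrix m m ℂ)).trace.re

/-- The partial trace over `A` of a matrix indexed by `A × B`. -/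
noncomputable def ptrA {A B : Type} [Fintype A] (M : Matrix (A × B) (A × B) ℂ) :
    Matrix B B ℂ :=
  Matrix.of fun b b' => ∑ a, M (a, b) (a, b')

/-!
Because `Uenc Uencᴴ = 1`, conjugating `u σ uᴴ` by `Uenc` gives
`(v ⊗ 1) (Uencᴴ σ Uenc) (v ⊗ 1)ᴴ`, and a unitary acting on the traced-out factor `A` does not
change the partial trace. So the left-hand side is `½ ‖ptr_A (Uencᴴ (ρ - u σ uᴴ) Uenc)‖₁`.
Conjugation by the co-isometry `Uenc` preserves the trace norm, and the partial trace contracts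
it on Hermitian matrices: by duality `‖H‖₁ = max_W Re tr (H W)` over unitaries `W`, and
`tr (ptr_A M · W) = tr (M (1 ⊗ W))` with `1 ⊗ W` unitary.
-/

open Matrix
open scoped MatrixOrder

section TraceNorm

variable {m n : Type} [Fintype m] [DecidableEq m] [Fintype n] [DecidableEq n]

lemma traceNorm_eq_re_trace_abs (M : Matrix m m ℂ) : traceNorm M = (CFC.abs M).trace.re := by
  rw [CFC.abs, star_eq_conjTranspose,
    CFC.sqrt_eq_real_sqrt _ (posSemidef_conjTranspose_mul_self M).nonneg, cfcₙ_eq_cfc (hf0 := Real.sqrt_zero), (posSemidef_conjTranspose_mul_self M).1.cfc_eq,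
    IsHermitian.cfc, Unitary.conjStarAlgAut_apply, traceNorm]
  rfl

lemma trace_conjStarAlgAut {K : Type*} [CommRing K] [StarRing K] (U : unitary (Matrix m m K))
    (X : Matrix m m K) : (Unitary.conjStarAlgAut K _ U X).trace = X.trace := by
  rw [Unitary.conjStarAlgAut_apply, trace_mul_cycle, Unitary.coe_star_mul_self, one_mul]

lemma traceNorm_conjTranspose_mul_mul {U : Matrix m n ℂ} (hU : U * Uᴴ = 1) (T : Matrix m m ℂ) :
    traceNorm (Uᴴ * T * U) = traceNorm T := by
  have habs : CFC.abs (Uᴴ * T * U) = Uᴴ * CFC.abs T * U := by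
    refine CFC.sqrt_unique ?_ ((CFC.abs_nonneg T).posSemidef.conjTranspose_mul_mul_same U).nonneg
    have hcancel (X : Matrix m n ℂ) : U * (Uᴴ * X) = X := by
      rw [← Matrix.mul_assoc, hU, Matrix.one_mul]
    simp only [star_eq_conjTranspose, conjTranspose_mul, conjTranspose_conjTranspose,
      Matrix.mul_assoc, hcancel]
    rw [← Matrix.mul_assoc (CFC.abs T), CFC.abs_mul_abs, star_eq_conjTranspose, Matrix.mul_assoc]
  rw [traceNorm_eq_re_trace_abs, habs, trace_mul_cycle, hU, one_mul, traceNorm_eq_re_trace_abs]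

lemma Matrix.IsHermitian.traceNorm_eq_sum_abs_eigenvalues {H : Matrix m m ℂ}
    (hH : H.IsHermitian) : traceNorm H = ∑ i, |hH.eigenvalues i| := by
  rw [traceNorm_eq_re_trace_abs, CFC.abs_eq_cfc_norm H hH.isSelfAdjoint, hH.cfc_eq,
    IsHermitian.cfc, trace_conjStarAlgAut, trace_diagonal, Complex.re_sum]
  simp

lemma Matrix.IsHermitian.re_trace_mul_le_traceNorm {H V : Matrix m m ℂ} (hH : H.IsHermitian)
    (hV : V ∈ unitaryGroup m ℂ) : (H * V).trace.re ≤ traceNorm H := by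
  set E : Matrix m m ℂ := ↑hH.eigenvectorUnitary
  set W : Matrix m m ℂ := star E * V * E
  have hW : W ∈ unitaryGroup m ℂ :=
    Submonoid.mul_mem _ (Submonoid.mul_mem _ (Unitary.star_mem hH.eigenvectorUnitary.2) hV)
      hH.eigenvectorUnitary.2
  have htrace : (H * V).trace = ∑ i, (hH.eigenvalues i : ℂ) * W i i := by
    conv_lhs => rw [hH.spectral_theorem, Unitary.conjStarAlgAut_apply]
    rw [show E * diagonal (RCLike.ofReal ∘ hH.eigenvalues) * star E * V
        = E * (diagonal (RCLike.ofReal ∘ hH.eigenvalues) * (star E * V)) by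
          simp only [Matrix.mul_assoc],
      trace_mul_comm, Matrix.mul_assoc]
    simp [trace, diagonal_mul, W, Matrix.mul_assoc]
  rw [htrace, Complex.re_sum, hH.traceNorm_eq_sum_abs_eigenvalues]
  gcongr with i
  calc ((hH.eigenvalues i : ℂ) * W i i).re ≤ ‖(hH.eigenvalues i : ℂ) * W i i‖ :=
        Complex.re_le_norm _
    _ ≤ |hH.eigenvalues i| := by
      rw [norm_mul, Complex.norm_real, Real.norm_eq_abs]
      exact mul_le_of_le_one_right (abs_nonneg _) (entry_norm_bound_of_unitary hW i i)

lemma Matrix.IsHermitian.exists_mem_unitaryGroup_trace_mul_eq_traceNorm {H : Matrix m m ℂ}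
    (hH : H.IsHermitian) : ∃ W ∈ unitaryGroup m ℂ, (H * W).trace = traceNorm H := by
  -- the sign of `H`, taken to be `1` on its kernel so that it is unitary
  let s : m → ℂ := fun i => if 0 ≤ hH.eigenvalues i then 1 else -1
  have hs (i : m) : (hH.eigenvalues i : ℂ) * s i = |hH.eigenvalues i| := by
    by_cases h : 0 ≤ hH.eigenvalues i
    · simp [s, h, abs_of_nonneg h]
    · simp [s, h, abs_of_neg (not_le.mp h)]
  have hsD : diagonal s ∈ unitaryGroup m ℂ := by
    rw [mem_unitaryGroup_iff, star_eq_conjTranspose, diagonal_conjTranspose, diagonal_mul_diagonal]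
    convert diagonal_one with i
    by_cases h : 0 ≤ hH.eigenvalues i <;> simp [s, h]
  refine ⟨Unitary.conjStarAlgAut ℂ _ hH.eigenvectorUnitary (diagonal s),
    Unitary.map_mem _ hsD, ?_⟩
  conv_lhs => enter [1, 1]; rw [hH.spectral_theorem]
  rw [← map_mul, trace_conjStarAlgAut, diagonal_mul_diagonal, trace_diagonal,
    hH.traceNorm_eq_sum_abs_eigenvalues, Complex.ofReal_sum]
  exact Finset.sum_congr rfl fun i _ => hs i

end TraceNorm

section PartialTrace

variable {A B : Type} [Fintype A]

lemma ptrA_sub (X Y : Matrix (A × B) (A × B) ℂ) : ptrA (X - Y) = ptrA X - ptrA Y := by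
  ext b b'
  simp [ptrA, Finset.sum_sub_distrib]

lemma isHermitian_ptrA {M : Matrix (A × B) (A × B) ℂ} (hM : M.IsHermitian) :
    (ptrA M).IsHermitian := by
  ext b b'
  simp only [conjTranspose_apply, ptrA, of_apply, star_sum]
  exact Finset.sum_congr rfl fun a _ => hM.apply _ _

lemma trace_ptrA [Fintype B] (M : Matrix (A × B) (A × B) ℂ) : (ptrA M).trace = M.trace := by
  simp only [trace, diag, ptrA, of_apply, Fintype.sum_prod_type]
  exact Finset.sum_comm

lemma ptrA_mul_one_kronecker [DecidableEq A] [Fintype B] (M : Matrix (A × B) (A × B) ℂ)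
    (W : Matrix B B ℂ) : ptrA (M * ((1 : Matrix A A ℂ) ⊗ₖ W)) = ptrA M * W := by
  ext b b'
  simp only [ptrA, mul_apply, kroneckerMap_apply, one_apply, ite_mul, one_mul, zero_mul, mul_ite,
    mul_zero, Fintype.sum_prod_type, Finset.sum_ite_irrel, Finset.sum_const_zero,
    Finset.sum_ite_eq', Finset.mem_univ, ↓reduceIte, of_apply, Finset.sum_mul]
  exact Finset.sum_comm

lemma trace_ptrA_mul [DecidableEq A] [Fintype B] (M : Matrix (A × B) (A × B) ℂ)
    (W : Matrix B B ℂ) : (ptrA M * W).trace = (M * ((1 : Matrix A A ℂ) ⊗ₖ W)).trace := by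
  rw [← ptrA_mul_one_kronecker, trace_ptrA]

lemma ptrA_kronecker_one_mul_mul_conjTranspose [DecidableEq A] [Fintype B] [DecidableEq B]
    {v : Matrix A A ℂ} (hv : vᴴ * v = 1) (N : Matrix (A × B) (A × B) ℂ) :
    ptrA ((v ⊗ₖ (1 : Matrix B B ℂ)) * N * (v ⊗ₖ (1 : Matrix B B ℂ))ᴴ) = ptrA N := by
  refine ext_iff_trace_mul_right.mpr fun W => ?_
  rw [trace_ptrA_mul, trace_ptrA_mul]
  have hconj : (v ⊗ₖ (1 : Matrix B B ℂ))ᴴ * ((1 : Matrix A A ℂ) ⊗ₖ W) * (v ⊗ₖ 1) = 1 ⊗ₖ W := by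
    rw [conjTranspose_kronecker, conjTranspose_one, ← mul_kronecker_mul, ← mul_kronecker_mul,
      Matrix.mul_one, hv, Matrix.one_mul, Matrix.mul_one]
  calc ((v ⊗ₖ 1) * N * (v ⊗ₖ 1)ᴴ * (1 ⊗ₖ W)).trace
      = (N * ((v ⊗ₖ (1 : Matrix B B ℂ))ᴴ * ((1 : Matrix A A ℂ) ⊗ₖ W) * (v ⊗ₖ 1))).trace := by
        simp only [Matrix.mul_assoc]
        rw [trace_mul_comm]
        simp only [Matrix.mul_assoc]
    _ = (N * (1 ⊗ₖ W)).trace := by rw [hconj]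

lemma Matrix.IsHermitian.traceNorm_ptrA_le [DecidableEq A] [Fintype B] [DecidableEq B]
    {M : Matrix (A × B) (A × B) ℂ} (hM : M.IsHermitian) : traceNorm (ptrA M) ≤ traceNorm M := by
  obtain ⟨W, hW, htrace⟩ := (isHermitian_ptrA hM).exists_mem_unitaryGroup_trace_mul_eq_traceNorm
  calc traceNorm (ptrA M) = (ptrA M * W).trace.re := by rw [htrace, Complex.ofReal_re]
    _ = (M * ((1 : Matrix A A ℂ) ⊗ₖ W)).trace.re := by rw [trace_ptrA_mul]
    _ ≤ traceNorm M := hM.re_trace_mul_le_traceNorm (kronecker_mem_unitary (one_mem _) hW)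

end PartialTrace

theorem semidistance_le_gauge_trace_distance_general
    {A B nn : Type} [Fintype A] [Fintype B] [Fintype nn]
    [DecidableEq A] [DecidableEq B] [DecidableEq nn]
    (Uenc : Matrix nn (A × B) ℂ)
    (hUenc2 : Uenc * Uencᴴ = 1)
    (u : Matrix nn nn ℂ)
    (v : Matrix A A ℂ) (hv1 : vᴴ * v = 1)
    (huv : Uencᴴ * u * Uenc = v ⊗ₖ (1 : Matrix B B ℂ))
    (d : Matrix nn nn ℂ → Matrix nn nn ℂ → ℝ)
    (hd : ∀ ρ σ : Matrix nn nn ℂ, d ρ σ =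
      (1 / 2) * traceNorm (ptrA (Uencᴴ * ρ * Uenc) - ptrA (Uencᴴ * σ * Uenc))) :
    ∀ ρ σ : Matrix nn nn ℂ, ρ.IsHermitian → σ.IsHermitian →
      d ρ σ ≤ (1 / 2) * traceNorm (ρ - u * σ * uᴴ) := by
  intro ρ σ hρ hσ
  have hcancel (X : Matrix nn (A × B) ℂ) : Uenc * (Uencᴴ * X) = X := by
    rw [← Matrix.mul_assoc, hUenc2, Matrix.one_mul]
  have hconj : Uencᴴ * (u * σ * uᴴ) * Uenc =
      (v ⊗ₖ 1) * (Uencᴴ * σ * Uenc) * (v ⊗ₖ (1 : Matrix B B ℂ))ᴴ := by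
    rw [← huv]
    simp only [conjTranspose_mul, conjTranspose_conjTranspose, Matrix.mul_assoc, hcancel]
  have hherm : (ρ - u * σ * uᴴ).IsHermitian := hρ.sub (isHermitian_mul_mul_conjTranspose u hσ)
  rw [hd, ← ptrA_kronecker_one_mul_mul_conjTranspose hv1 (Uencᴴ * σ * Uenc), ← hconj, ← ptrA_sub,
    ← Matrix.sub_mul, ← Matrix.mul_sub]
  refine mul_le_mul_of_nonneg_left ?_ (by norm_num)
  calc traceNorm (ptrA (Uencᴴ * (ρ - u * σ * uᴴ) * Uenc))
      ≤ traceNorm (Uencᴴ * (ρ - u * σ * uᴴ) * Uenc) :=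
        (isHermitian_conjTranspose_mul_mul Uenc hherm).traceNorm_ptrA_le
    _ = traceNorm (ρ - u * σ * uᴴ) := traceNorm_conjTranspose_mul_mul hUenc2 _

/-- The semi-distance `d` is bounded by the trace distance to any gauge-transformed
state: if `U_enc† u U_enc = v ⊗ I_B`, then for Hermitian `ρ, σ`,
`d(ρ, σ) ≤ (1/2)·‖ρ - uσu†‖₁`. -/
theorem semidistance_le_gauge_trace_distance
    {A B nn : Type} [Fintype A] [Fintype B] [Fintype nn]
    [DecidableEq A] [DecidableEq B] [DecidableEq nn]
    (hcard : Fintype.card nn = Fintype.card A * Fintype.card B)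
    (Uenc : Matrix nn (A × B) ℂ)
    (hUenc1 : Uencᴴ * Uenc = 1) (hUenc2 : Uenc * Uencᴴ = 1)
    (u : Matrix nn nn ℂ) (hu1 : uᴴ * u = 1) (hu2 : u * uᴴ = 1)
    (v : Matrix A A ℂ) (hv1 : vᴴ * v = 1) (hv2 : v * vᴴ = 1)
    (huv : Uencᴴ * u * Uenc = v ⊗ₖ (1 : Matrix B B ℂ))
    (d : Matrix nn nn ℂ → Matrix nn nn ℂ → ℝ)
    (hd : ∀ ρ σ : Matrix nn nn ℂ, d ρ σ =
      (1 / 2) * traceNorm (ptrA (Uencᴴ * ρ * Uenc) - ptrA (Uencᴴ * σ * Uenc))) :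
    ∀ ρ σ : Matrix nn nn ℂ, ρ.IsHermitian → σ.IsHermitian →
      d ρ σ ≤ (1 / 2) * traceNorm (ρ - u * σ * uᴴ) :=
  semidistance_le_gauge_trace_distance_general Uenc hUenc2 u v hv1 huv d hd
end

section
/- On the 8-qubit space (ℂ²)^{⊗8}, let X_j, Z_j denote the Pauli matrices acting on qubit j and the identity elsewhere, and let H_p = X₁X₂ + X₃X₄ + X₅X₆ + X₇X₈ + Z₂Z₃ + Z₄Z₅ + Z₆Z₇ + Z₈Z₁. Then for every real number s, the encoded adiabatic-gate-teleportation swap Hamiltonian H̄(s) = (1−s)·(X₆X₇ + Z₃Z₄) + s·(X₂X₃ + Z₇Z₈) commutes with H_p: [H̄(s), H_p] = 0. -/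
/-- The Pauli matrix `X`. -/
def pauliX : Matrix (Fin 2) (Fin 2) ℂ := !![0, 1; 1, 0]

/-- The Pauli matrix `Z`. -/
def pauliZ : Matrix (Fin 2) (Fin 2) ℂ := !![1, 0; 0, -1]

/-- The `n`-qubit operator acting as the 2×2 matrix `P` on qubit `j` and as the
identity on every other qubit (the Kronecker product `I ⊗ ⋯ ⊗ P ⊗ ⋯ ⊗ I`). -/
noncomputable def pauliAt {n : ℕ} (P : Matrix (Fin 2) (Fin 2) ℂ) (j : Fin n) :
    Matrix (Fin n → Fin 2) (Fin n → Fin 2) ℂ :=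
  Matrix.of fun v w => ∏ i, if i = j then P (v i) (w i) else (if v i = w i then 1 else 0)

/-- Kronecker product of a family of `2×2` matrices. -/
noncomputable def kron {n : ℕ} (f : Fin n → Matrix (Fin 2) (Fin 2) ℂ) :
    Matrix (Fin n → Fin 2) (Fin n → Fin 2) ℂ :=
  Matrix.of fun v w => ∏ i, f i (v i) (w i)

lemma kron_mul {n : ℕ} (f g : Fin n → Matrix (Fin 2) (Fin 2) ℂ) :
    kron f * kron g = kron (fun i => f i * g i) := by
  ext v w
  simp only [kron, Matrix.mul_apply, Matrix.of_apply]
  rw [Fintype.prod_sum (fun i x => f i (v i) x * g i x (w i))]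
  apply Finset.sum_congr rfl
  intro u _
  rw [Finset.prod_mul_distrib]

lemma pauliAt_eq_kron {n : ℕ} (P : Matrix (Fin 2) (Fin 2) ℂ) (j : Fin n) :
    pauliAt P j = kron (fun i => if i = j then P else 1) := by
  ext v w
  simp only [pauliAt, kron, Matrix.of_apply]
  apply Finset.prod_congr rfl
  intro i _
  by_cases h : i = j <;> simp [h, Matrix.one_apply]

lemma pauliAt_mul_same {n : ℕ} (P Q : Matrix (Fin 2) (Fin 2) ℂ) (j : Fin n) :
    pauliAt P j * pauliAt Q j = pauliAt (P * Q) j := by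
  rw [pauliAt_eq_kron P, pauliAt_eq_kron Q, pauliAt_eq_kron (P * Q), kron_mul]
  refine congrArg kron ?_
  funext i
  by_cases h : i = j <;> simp [h]

lemma pauliAt_commute_ne {n : ℕ} (P Q : Matrix (Fin 2) (Fin 2) ℂ) {j k : Fin n}
    (h : j ≠ k) : Commute (pauliAt P j) (pauliAt Q k) := by
  show _ * _ = _ * _
  rw [pauliAt_eq_kron P, pauliAt_eq_kron Q, kron_mul, kron_mul]
  refine congrArg kron ?_
  funext i
  by_cases h1 : i = j <;> by_cases h2 : i = k
  · exact absurd (h1.symm.trans h2) h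
  · simp [h1, h2, h]
  · simp [h1, h2, Ne.symm h]
  · simp [h1, h2]

lemma pauliAt_neg {n : ℕ} (P : Matrix (Fin 2) (Fin 2) ℂ) (j : Fin n) :
    pauliAt (-P) j = -pauliAt P j := by
  ext v w
  simp only [pauliAt, Matrix.of_apply, Matrix.neg_apply]
  rw [Finset.prod_eq_prod_diff_singleton_mul (Finset.mem_univ j)
        (fun x => if x = j then -P (v x) (w x) else if v x = w x then 1 else 0),
      Finset.prod_eq_prod_diff_singleton_mul (Finset.mem_univ j)
        (fun x => if x = j then P (v x) (w x) else if v x = w x then 1 else 0)]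
  have hd : (∏ x ∈ Finset.univ \ {j},
        if x = j then -P (v x) (w x) else if v x = w x then 1 else 0) =
      ∏ x ∈ Finset.univ \ {j},
        if x = j then P (v x) (w x) else if v x = w x then 1 else 0 := by
    refine Finset.prod_congr rfl fun x hx => ?_
    have hxj : x ≠ j := by
      simp only [Finset.mem_sdiff, Finset.mem_singleton] at hx
      exact hx.2
    simp [hxj]
  rw [hd, if_pos rfl, if_pos rfl, mul_neg]

lemma pauliX_mul_pauliZ : pauliX * pauliZ = -(pauliZ * pauliX) := by
  ext i j
  fin_cases i <;> fin_cases j <;>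
    simp [pauliX, pauliZ, Matrix.mul_apply, Fin.sum_univ_two]

lemma pauliAt_XZ {n : ℕ} (j : Fin n) :
    pauliAt pauliX j * pauliAt pauliZ j = -(pauliAt pauliZ j * pauliAt pauliX j) := by
  rw [pauliAt_mul_same, pauliAt_mul_same, pauliX_mul_pauliZ, pauliAt_neg]

lemma pauliAt_commute_same {n : ℕ} (P : Matrix (Fin 2) (Fin 2) ℂ) (j k : Fin n) :
    Commute (pauliAt P j) (pauliAt P k) := by
  by_cases h : j = k
  · subst h; exact Commute.refl _
  · exact pauliAt_commute_ne P P h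

/-- Two-qubit same-letter operators always commute. -/
lemma commute_same {n : ℕ} (P : Matrix (Fin 2) (Fin 2) ℂ) (a b c d : Fin n) :
    Commute (pauliAt P a * pauliAt P b) (pauliAt P c * pauliAt P d) :=
  Commute.mul_left
    ((pauliAt_commute_same P a c).mul_right (pauliAt_commute_same P a d))
    ((pauliAt_commute_same P b c).mul_right (pauliAt_commute_same P b d))

/-- Two-qubit operators on disjoint sets of qubits commute. -/
lemma commute_disj {n : ℕ} (P Q : Matrix (Fin 2) (Fin 2) ℂ) {a b c d : Fin n}
    (h1 : a ≠ c) (h2 : a ≠ d) (h3 : b ≠ c) (h4 : b ≠ d) :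
    Commute (pauliAt P a * pauliAt P b) (pauliAt Q c * pauliAt Q d) :=
  Commute.mul_left
    ((pauliAt_commute_ne P Q h1).mul_right (pauliAt_commute_ne P Q h2))
    ((pauliAt_commute_ne P Q h3).mul_right (pauliAt_commute_ne P Q h4))

set_option maxHeartbeats 1000000 in
/-- `X_j X_k` commutes with `Z_j Z_k` (two sign flips cancel). -/
lemma commute_double {n : ℕ} {j k : Fin n} (h : j ≠ k) :
    Commute (pauliAt pauliX j * pauliAt pauliX k)
      (pauliAt pauliZ j * pauliAt pauliZ k) := by
  have hkj : Commute (pauliAt pauliX k) (pauliAt pauliZ j) :=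
    pauliAt_commute_ne _ _ h.symm
  have hjk : Commute (pauliAt pauliX j) (pauliAt pauliZ k) :=
    pauliAt_commute_ne _ _ h
  show _ = _
  calc pauliAt pauliX j * pauliAt pauliX k * (pauliAt pauliZ j * pauliAt pauliZ k)
      = pauliAt pauliX j * pauliAt pauliZ j * (pauliAt pauliX k * pauliAt pauliZ k) :=
        hkj.mul_mul_mul_comm _ _
    _ = pauliAt pauliZ j * pauliAt pauliX j * (pauliAt pauliZ k * pauliAt pauliX k) := by
        rw [pauliAt_XZ j, pauliAt_XZ k, neg_mul_neg]
    _ = pauliAt pauliZ j * pauliAt pauliZ k * (pauliAt pauliX j * pauliAt pauliX k) :=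
        hjk.mul_mul_mul_comm _ _

/-- The encoded adiabatic-gate-teleportation swap Hamiltonian
`H̄(s) = (1-s)(X₆X₇ + Z₃Z₄) + s(X₂X₃ + Z₇Z₈)` commutes with the penalty Hamiltonian
`H_p = X₁X₂ + X₃X₄ + X₅X₆ + X₇X₈ + Z₂Z₃ + Z₄Z₅ + Z₆Z₇ + Z₈Z₁`. -/
theorem agt_swap_commutes_with_penalty
    (Hp : Matrix (Fin 8 → Fin 2) (Fin 8 → Fin 2) ℂ)
    (hHpdef : Hp =
      pauliAt pauliX 0 * pauliAt pauliX 1 + pauliAt pauliX 2 * pauliAt pauliX 3 +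
      pauliAt pauliX 4 * pauliAt pauliX 5 + pauliAt pauliX 6 * pauliAt pauliX 7 +
      pauliAt pauliZ 1 * pauliAt pauliZ 2 + pauliAt pauliZ 3 * pauliAt pauliZ 4 +
      pauliAt pauliZ 5 * pauliAt pauliZ 6 + pauliAt pauliZ 7 * pauliAt pauliZ 0)
    (Hbar : ℝ → Matrix (Fin 8 → Fin 2) (Fin 8 → Fin 2) ℂ)
    (hHbardef : ∀ s : ℝ, Hbar s =
      ((1 - s : ℝ) : ℂ) • (pauliAt pauliX 5 * pauliAt pauliX 6 +
        pauliAt pauliZ 2 * pauliAt pauliZ 3) +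
      ((s : ℝ) : ℂ) • (pauliAt pauliX 1 * pauliAt pauliX 2 +
        pauliAt pauliZ 6 * pauliAt pauliZ 7)) :
    ∀ s : ℝ, Hbar s * Hp - Hp * Hbar s = 0 := by
  intro s
  rw [hHbardef s, hHpdef]
  apply sub_eq_zero_of_eq
  apply Commute.eq
  have hA1 : Commute (pauliAt pauliX 5 * pauliAt pauliX 6 : Matrix (Fin 8 → Fin 2) (Fin 8 → Fin 2) ℂ)
      (pauliAt pauliX 0 * pauliAt pauliX 1 + pauliAt pauliX 2 * pauliAt pauliX 3 +
      pauliAt pauliX 4 * pauliAt pauliX 5 + pauliAt pauliX 6 * pauliAt pauliX 7 +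
      pauliAt pauliZ 1 * pauliAt pauliZ 2 + pauliAt pauliZ 3 * pauliAt pauliZ 4 +
      pauliAt pauliZ 5 * pauliAt pauliZ 6 + pauliAt pauliZ 7 * pauliAt pauliZ 0) :=
    (((((((commute_same pauliX 5 6 0 1).add_right
      (commute_same pauliX 5 6 2 3)).add_right
      (commute_same pauliX 5 6 4 5)).add_right
      (commute_same pauliX 5 6 6 7)).add_right
      (commute_disj pauliX pauliZ (by decide) (by decide) (by decide) (by decide))).add_right
      (commute_disj pauliX pauliZ (by decide) (by decide) (by decide) (by decide))).add_right
      (commute_double (by decide))).add_right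
      (commute_disj pauliX pauliZ (by decide) (by decide) (by decide) (by decide))
  have hA2 : Commute (pauliAt pauliZ 2 * pauliAt pauliZ 3 : Matrix (Fin 8 → Fin 2) (Fin 8 → Fin 2) ℂ)
      (pauliAt pauliX 0 * pauliAt pauliX 1 + pauliAt pauliX 2 * pauliAt pauliX 3 +
      pauliAt pauliX 4 * pauliAt pauliX 5 + pauliAt pauliX 6 * pauliAt pauliX 7 +
      pauliAt pauliZ 1 * pauliAt pauliZ 2 + pauliAt pauliZ 3 * pauliAt pauliZ 4 +
      pauliAt pauliZ 5 * pauliAt pauliZ 6 + pauliAt pauliZ 7 * pauliAt pauliZ 0) :=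
    ((((((((commute_disj pauliZ pauliX (by decide) (by decide) (by decide) (by decide))).add_right
      ((commute_double (by decide)).symm)).add_right
      (commute_disj pauliZ pauliX (by decide) (by decide) (by decide) (by decide))).add_right
      (commute_disj pauliZ pauliX (by decide) (by decide) (by decide) (by decide))).add_right
      (commute_same pauliZ 2 3 1 2)).add_right
      (commute_same pauliZ 2 3 3 4)).add_right
      (commute_same pauliZ 2 3 5 6)).add_right
      (commute_same pauliZ 2 3 7 0)
  have hA3 : Commute (pauliAt pauliX 1 * pauliAt pauliX 2 : Matrix (Fin 8 → Fin 2) (Fin 8 → Fin 2) ℂ)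
      (pauliAt pauliX 0 * pauliAt pauliX 1 + pauliAt pauliX 2 * pauliAt pauliX 3 +
      pauliAt pauliX 4 * pauliAt pauliX 5 + pauliAt pauliX 6 * pauliAt pauliX 7 +
      pauliAt pauliZ 1 * pauliAt pauliZ 2 + pauliAt pauliZ 3 * pauliAt pauliZ 4 +
      pauliAt pauliZ 5 * pauliAt pauliZ 6 + pauliAt pauliZ 7 * pauliAt pauliZ 0) :=
    (((((((commute_same pauliX 1 2 0 1).add_right
      (commute_same pauliX 1 2 2 3)).add_right
      (commute_same pauliX 1 2 4 5)).add_right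
      (commute_same pauliX 1 2 6 7)).add_right
      (commute_double (by decide))).add_right
      (commute_disj pauliX pauliZ (by decide) (by decide) (by decide) (by decide))).add_right
      (commute_disj pauliX pauliZ (by decide) (by decide) (by decide) (by decide))).add_right
      (commute_disj pauliX pauliZ (by decide) (by decide) (by decide) (by decide))
  have hA4 : Commute (pauliAt pauliZ 6 * pauliAt pauliZ 7 : Matrix (Fin 8 → Fin 2) (Fin 8 → Fin 2) ℂ)
      (pauliAt pauliX 0 * pauliAt pauliX 1 + pauliAt pauliX 2 * pauliAt pauliX 3 +
      pauliAt pauliX 4 * pauliAt pauliX 5 + pauliAt pauliX 6 * pauliAt pauliX 7 +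
      pauliAt pauliZ 1 * pauliAt pauliZ 2 + pauliAt pauliZ 3 * pauliAt pauliZ 4 +
      pauliAt pauliZ 5 * pauliAt pauliZ 6 + pauliAt pauliZ 7 * pauliAt pauliZ 0) :=
    (((((((commute_disj pauliZ pauliX (by decide) (by decide) (by decide) (by decide)).add_right
      (commute_disj pauliZ pauliX (by decide) (by decide) (by decide) (by decide))).add_right
      (commute_disj pauliZ pauliX (by decide) (by decide) (by decide) (by decide))).add_right
      ((commute_double (by decide)).symm)).add_right
      (commute_same pauliZ 6 7 1 2)).add_right
      (commute_same pauliZ 6 7 3 4)).add_right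
      (commute_same pauliZ 6 7 5 6)).add_right
      (commute_same pauliZ 6 7 7 0)
  exact Commute.add_left
    (Commute.smul_left (hA1.add_left hA2) _)
    (Commute.smul_left (hA3.add_left hA4) _)
end

section
/- Fix N ≥ 1. On the (2N+2)-qubit space, let H_p = −( Σ_{i=1}^{N+1} X_{2i−1}X_{2i} + Σ_{i=1}^{N} Z_{2i}Z_{2i+1} + Z_{2N+2}Z₁ ). For each choice of signs s_x, s_z ∈ {−1, +1}, define on the N-qubit space the Hamiltonian H(s_x, s_z) = −( Σ_{i=1}^{N} X_i + s_x·Π_{i=1}^{N} X_i + Z₁ + Σ_{i=1}^{N−1} Z_i Z_{i+1} + s_z·Z_N ), where Π_{i=1}^{N} X_i is the product X₁X₂⋯X_N. Then the spectrum (set of eigenvalues) of H_p equals the union over the four sign choices (s_x, s_z) ∈ {−1,+1}² of the spectra of H(s_x, s_z). -/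
/-!
An 𝔽₂-linear relabelling of the computational basis (`qubitChange`, a permutation of basis
states) carries `X_{2k-1}X_{2k}` to `X_k` and `Z_{2k}Z_{2k+1}` to `Z_kZ_{k+1}` (k < N), `Z_{2N+2}Z₁`
to `Z₁`, and the remaining terms `X_{2N+1}X_{2N+2}`, `Z_{2N}Z_{2N+1}` to `X₁⋯X_N ⊗ X_c` and
`Z_N ⊗ Z_q`. Here the `X_k`, `Z_k` act on N logical qubits, `c` and `q` are two sector qubits, and
N further qubits are spectators. A Hadamard gate on `c` turns `X_c` into `Z_c`; the result is
block diagonal with blocks `H(s_x, s_z)`, where `s_x`, `s_z` are the eigenvalues of `Z_c`, `Z_q`,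
and the spectrum of a block-diagonal matrix is the union of the spectra of its blocks.
-/

section

open Matrix Kronecker

section Translation

variable {G G' R : Type*} [DecidableEq G] [DecidableEq G'] [Semiring R]

def translationMatrix [Add G] (t : G) : Matrix G G R :=
  of fun v w => if w = v + t then 1 else 0

@[simp]
lemma translationMatrix_zero [AddZeroClass G] : (translationMatrix 0 : Matrix G G R) = 1 := by
  ext v w
  simp [translationMatrix, one_apply, eq_comm]

lemma translationMatrix_mul [Fintype G] [AddSemigroup G] (s t : G) :
    (translationMatrix s * translationMatrix t : Matrix G G R) = translationMatrix (s + t) := by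
  ext v w
  simp only [translationMatrix, mul_apply, of_apply, ite_mul, one_mul, zero_mul,
    Finset.sum_ite_eq', Finset.mem_univ, if_true, add_assoc]

lemma translationMatrix_prod [Add G] [Add G'] (s : G) (t : G') :
    (translationMatrix (s, t) : Matrix (G × G') (G × G') R) =
      translationMatrix s ⊗ₖ translationMatrix t := by
  ext ⟨v, v'⟩ ⟨w, w'⟩
  simp only [translationMatrix, kroneckerMap_apply, of_apply, ite_zero_mul_ite_zero, mul_one,
    Prod.ext_iff, Prod.mk_add_mk]

lemma submatrix_translationMatrix [Add G] [Add G'] (e : G' ≃+ G) (t : G') :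
    (translationMatrix (e t) : Matrix G G R).submatrix e e = translationMatrix t := by
  ext v w
  simp [translationMatrix, ← map_add]

lemma list_prod_ofFn_translationMatrix [Fintype G] [AddCommMonoid G] {m : ℕ} (g : Fin m → G) :
    (List.ofFn fun i => (translationMatrix (g i) : Matrix G G R)).prod =
      translationMatrix (∑ i, g i) := by
  induction m with
  | zero => simp
  | succ m ih => rw [List.ofFn_succ, List.prod_cons, ih, translationMatrix_mul, Fin.sum_univ_succ]

end Translation

section KroneckerLemmas

variable {α β γ δ ι : Type*} {R : Type*} [CommSemiring R]

lemma diagonal_comp_fst [DecidableEq α] [DecidableEq β] (d : α → R) :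
    diagonal (fun x : α × β => d x.1) = diagonal d ⊗ₖ 1 := by
  rw [← diagonal_one, diagonal_kronecker_diagonal]
  simp

lemma diagonal_comp_snd [DecidableEq α] [DecidableEq β] (d : β → R) :
    diagonal (fun x : α × β => d x.2) = 1 ⊗ₖ diagonal d := by
  rw [← diagonal_one, diagonal_kronecker_diagonal]
  simp

lemma sum_kronecker (s : Finset ι) (A : ι → Matrix α β R) (B : Matrix γ δ R) :
    (∑ i ∈ s, A i) ⊗ₖ B = ∑ i ∈ s, A i ⊗ₖ B := by
  ext
  simp [Matrix.sum_apply, Finset.sum_mul]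

lemma submatrix_sum (s : Finset ι) (A : ι → Matrix α β R) (f : γ → α) (g : δ → β) :
    (∑ i ∈ s, A i).submatrix f g = ∑ i ∈ s, (A i).submatrix f g := by
  ext
  simp [Matrix.sum_apply]

lemma blockDiagonal_fun_add [DecidableEq γ] (M M' : γ → Matrix α α R) :
    blockDiagonal (fun k => M k + M' k) = blockDiagonal M + blockDiagonal M' :=
  blockDiagonal_add M M'

lemma blockDiagonal_const [DecidableEq α] [DecidableEq γ] (A : Matrix α α R) :
    blockDiagonal (fun _ : γ => A) = A ⊗ₖ 1 := by
  rw [← diagonal_one, kronecker_diagonal]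
  simp

lemma blockDiagonal_smul_const [DecidableEq γ] (c : γ → R) (A : Matrix α α R) :
    blockDiagonal (fun k => c k • A) = A ⊗ₖ diagonal c := by
  rw [kronecker_diagonal]
  simp [op_smul_eq_smul]

end KroneckerLemmas

lemma blockDiagonal_fun_neg {α γ R : Type*} [DecidableEq γ] [Ring R] (M : γ → Matrix α α R) :
    blockDiagonal (fun k => -M k) = -blockDiagonal M :=
  blockDiagonal_neg M

lemma isUnit_kronecker {α β R : Type*} [Fintype α] [Fintype β] [DecidableEq α] [DecidableEq β]
    [CommRing R] {A : Matrix α α R} {B : Matrix β β R} (hA : IsUnit A) (hB : IsUnit B) :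
    IsUnit (A ⊗ₖ B) := by
  rw [isUnit_iff_isUnit_det] at hA hB ⊢
  rw [det_kronecker]
  exact (hA.pow _).mul (hB.pow _)

lemma spectrum_eq_of_mul_eq_mul {R A : Type*} [CommSemiring R] [Ring A] [Algebra R A] {a b k : A}
    (hk : IsUnit k) (h : a * k = k * b) : spectrum R a = spectrum R b := by
  obtain ⟨u, rfl⟩ := hk
  rw [← spectrum.units_conjugate' (u := u) (a := a), mul_assoc, h, ← mul_assoc, Units.inv_mul,
    one_mul]

section Spectrum

variable {R : Type*} [CommRing R] {m n o : Type*} [Fintype m] [DecidableEq m] [Fintype n]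
  [DecidableEq n]

lemma spectrum_submatrix_equiv {F : Type*} [EquivLike F m n] (A : Matrix n n R) (e : F) :
    spectrum R (A.submatrix e e) = spectrum R A :=
  AlgEquiv.spectrum_eq (reindexAlgEquiv R R (e : m ≃ n).symm) A

lemma spectrum_blockDiagonal [Fintype o] [DecidableEq o] (M : o → Matrix m m R) :
    spectrum R (blockDiagonal M) = ⋃ k, spectrum R (M k) := by
  ext μ
  have hμ : algebraMap R (Matrix (m × o) (m × o) R) μ =
      blockDiagonal fun _ => algebraMap R (Matrix m m R) μ := by
    simp only [algebraMap_eq_diagonal, blockDiagonal_diagonal]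
    rfl
  simp only [Set.mem_iUnion, spectrum.mem_iff, hμ, ← blockDiagonal_sub,
    isUnit_iff_isUnit_det, det_blockDiagonal, IsUnit.prod_univ_iff, not_forall,
    Pi.sub_apply]

end Spectrum

section Qubits

def bitSign (a : Fin 2) : ℝ := (-1) ^ (a : ℕ)

lemma bitSign_add (a b : Fin 2) : bitSign (a + b) = bitSign a * bitSign b := by
  fin_cases a <;> fin_cases b <;> norm_num [bitSign, Fin.val_add]

lemma range_bitSign : Set.range bitSign = {-1, 1} := by
  ext r
  simp only [Set.mem_range, Fin.exists_fin_two, bitSign, Set.mem_insert_iff, Set.mem_singleton_iff]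
  norm_num [eq_comm, or_comm]

lemma pauliX_eq_translationMatrix : pauliX = translationMatrix 1 := by
  ext a b
  fin_cases a <;> fin_cases b <;> simp [pauliX, translationMatrix]

lemma pauliZ_eq_diagonal : pauliZ = diagonal fun a => (bitSign a : ℂ) := by
  ext a b
  fin_cases a <;> fin_cases b <;> simp [pauliZ, bitSign]

variable {n : ℕ}

lemma pauliAt_translationMatrix (t : Fin 2) (j : Fin n) :
    pauliAt (translationMatrix t) j = translationMatrix (Pi.single j t) := by
  ext v w
  simp only [pauliAt, translationMatrix, of_apply]
  rw [Finset.prod_congr rfl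
      (g := fun i => if w i = (v + Pi.single j t : Fin n → Fin 2) i then 1 else 0),
    Finset.prod_boole]
  · simp only [Finset.mem_univ, forall_const, ← funext_iff]
  intro i _
  by_cases h : i = j
  · subst h; simp
  · simp [h, eq_comm]

lemma pauliAt_diagonal (d : Fin 2 → ℂ) (j : Fin n) :
    pauliAt (diagonal d) j = diagonal fun v => d (v j) := by
  ext v w
  have factor : ∀ i, (if i = j then diagonal d (v i) (w i) else if v i = w i then 1 else 0) =
      (if v i = w i then 1 else 0) * (if i = j then d (v i) else 1) := by
    intro i
    by_cases h : i = j <;> by_cases h' : v i = w i <;> simp [h, h', diagonal_apply]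
  rw [pauliAt, of_apply, Finset.prod_congr rfl fun i _ => factor i, Finset.prod_mul_distrib,
    Finset.prod_boole, Finset.prod_ite_eq']
  by_cases h : v = w
  · simp [h]
  · simp [h, ← funext_iff]

lemma pauliAt_pauliX (j : Fin n) : pauliAt pauliX j = translationMatrix (Pi.single j 1) := by
  rw [pauliX_eq_translationMatrix, pauliAt_translationMatrix]

lemma pauliAt_pauliZ (j : Fin n) : pauliAt pauliZ j = diagonal fun v => (bitSign (v j) : ℂ) := by
  rw [pauliZ_eq_diagonal, pauliAt_diagonal]

lemma pauliAt_pauliZ_mul_pauliAt_pauliZ (i j : Fin n) :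
    pauliAt pauliZ i * pauliAt pauliZ j = diagonal fun v => (bitSign (v i + v j) : ℂ) := by
  simp only [pauliAt_pauliZ, diagonal_mul_diagonal, bitSign_add, Complex.ofReal_mul]

lemma list_prod_ofFn_pauliAt_pauliX :
    (List.ofFn fun i : Fin n => pauliAt pauliX i).prod = translationMatrix 1 := by
  simp only [pauliAt_pauliX, list_prod_ofFn_translationMatrix, Finset.univ_sum_single]
  rfl

end Qubits

namespace Fin

variable {M : Type*} [AddCommMonoid M] {n : ℕ}

lemma partialSum_add (f g : Fin n → M) : partialSum (f + g) = partialSum f + partialSum g := by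
  funext i
  induction i using Fin.induction with
  | zero => simp
  | succ i ih =>
    simp only [Pi.add_apply] at ih ⊢
    rw [partialSum_succ, partialSum_succ, partialSum_succ, ih, Pi.add_apply]
    abel

lemma partialSum_zero_fun : partialSum (0 : Fin n → M) = 0 := by
  funext i
  induction i using Fin.induction with
  | zero => simp
  | succ i ih => simp [partialSum_succ, ih]

end Fin

section QubitChange

/-- Coordinates `(c, q, w)`: the qubit on which `X_{2N+1}X_{2N+2}` acts after `qubitChange`, the
qubit carrying `Z_{2N}Z_{2N+1}`, and `N` spectator qubits. -/
abbrev Sector (N : ℕ) := Fin 2 × Fin 2 × (Fin N → Fin 2)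

/-- In coordinates `(u, c, q, w)` and with `W = Fin.partialSum w`, qubits `2k`, `2k + 1` (for
`k < N`) read `u k + c + W k`, `u k + c + W (k + 1)`, qubit `2N` reads `q + c + W N` and qubit
`2N + 1` reads `c`. So `w k` is the parity of the `k`-th `XX`-pair, flipping `u k` flips that pair,
and qubits `2k + 1`, `2k + 2` differ by `u k + u (k + 1)`. -/
def qubitChangeFun (N : ℕ) (x : (Fin N → Fin 2) × Sector N) (j : Fin (2 * N + 2)) : Fin 2 :=
  if h : (j : ℕ) < 2 * N then
    x.1 ⟨j / 2, by omega⟩ + x.2.1 + Fin.partialSum x.2.2.2 ⟨j / 2 + j % 2, by omega⟩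
  else if (j : ℕ) = 2 * N then x.2.2.1 + x.2.1 + Fin.partialSum x.2.2.2 (Fin.last N)
  else x.2.1

lemma qubitChangeFun_add (N : ℕ) (x y : (Fin N → Fin 2) × Sector N) :
    qubitChangeFun N (x + y) = qubitChangeFun N x + qubitChangeFun N y := by
  funext j
  simp only [qubitChangeFun, Prod.fst_add, Prod.snd_add, Pi.add_apply, Fin.partialSum_add]
  split_ifs <;> abel

variable {N : ℕ} (x : (Fin N → Fin 2) × Sector N)

lemma qubitChangeFun_apply_even (k : Fin N) :
    qubitChangeFun N x ⟨2 * k, by omega⟩ =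
      x.1 k + x.2.1 + Fin.partialSum x.2.2.2 k.castSucc := by
  rw [qubitChangeFun, dif_pos (by simp)]
  congr 3 <;> simp

lemma qubitChangeFun_apply_odd (k : Fin N) :
    qubitChangeFun N x ⟨2 * k + 1, by omega⟩ =
      x.1 k + x.2.1 + Fin.partialSum x.2.2.2 k.succ := by
  have hdiv : (2 * (k : ℕ) + 1) / 2 = k := by omega
  have hmod : (2 * (k : ℕ) + 1) % 2 = 1 := by omega
  rw [qubitChangeFun, dif_pos (by simp; omega)]
  simp only [hdiv, hmod]
  rfl

lemma qubitChangeFun_apply_two_mul :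
    qubitChangeFun N x ⟨2 * N, by omega⟩ =
      x.2.2.1 + x.2.1 + Fin.partialSum x.2.2.2 (Fin.last N) := by
  rw [qubitChangeFun, dif_neg (by simp), if_pos rfl]

lemma qubitChangeFun_apply_last (j : Fin (2 * N + 2)) (hj : (j : ℕ) = 2 * N + 1) :
    qubitChangeFun N x j = x.2.1 := by
  rw [qubitChangeFun, dif_neg (by omega), if_neg (by omega)]

lemma eq_zero_of_qubitChangeFun_eq_zero (hx : qubitChangeFun N x = 0) : x = 0 := by
  obtain ⟨u, c, q, w⟩ := x
  have hc : c = 0 := by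
    simpa [qubitChangeFun_apply_last] using congrFun hx ⟨2 * N + 1, by omega⟩
  subst hc
  have even (k : Fin N) : u k + Fin.partialSum w k.castSucc = 0 := by
    simpa [qubitChangeFun_apply_even] using congrFun hx ⟨2 * k, by omega⟩
  have hw : w = 0 := by
    funext k
    have odd : u k + Fin.partialSum w k.succ = 0 := by
      simpa [qubitChangeFun_apply_odd] using congrFun hx ⟨2 * k + 1, by omega⟩
    rwa [Fin.partialSum_succ, ← add_assoc, even k, zero_add] at odd
  subst hw
  have hu : u = 0 := funext fun k => by simpa [Fin.partialSum_zero_fun] using even k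
  have hq : q = 0 := by
    simpa [qubitChangeFun_apply_two_mul, Fin.partialSum_zero_fun] using
      congrFun hx ⟨2 * N, by omega⟩
  simp [hu, hq]

lemma qubitChangeFun_single (k : Fin N) :
    qubitChangeFun N (Pi.single k 1, 0) =
      Pi.single ⟨2 * k, by omega⟩ 1 + Pi.single ⟨2 * k + 1, by omega⟩ 1 := by
  funext j
  simp only [qubitChangeFun, Pi.add_apply, Pi.single_apply, Fin.ext_iff, Prod.snd_zero,
    Prod.fst_zero, Fin.partialSum_zero_fun, Pi.zero_apply, add_zero]
  split_ifs <;> first | rfl | omega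

lemma qubitChangeFun_one_one {M : ℕ} :
    qubitChangeFun (M + 1) (1, 1, 0) =
      Pi.single ⟨2 * (M + 1), by omega⟩ 1 + Pi.single ⟨2 * (M + 1) + 1, by omega⟩ 1 := by
  funext j
  simp only [qubitChangeFun, Pi.add_apply, Pi.single_apply, Fin.ext_iff, Prod.snd_zero,
    Prod.fst_zero, Fin.partialSum_zero_fun, Pi.zero_apply, Pi.one_apply, add_zero]
  split_ifs <;> first | rfl | omega

lemma qubitChangeFun_apply_odd_add_even {M : ℕ} (x : (Fin (M + 1) → Fin 2) × Sector (M + 1))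
    (k : Fin M) :
    qubitChangeFun (M + 1) x ⟨2 * k + 1, by omega⟩ +
        qubitChangeFun (M + 1) x ⟨2 * k + 2, by omega⟩ =
      x.1 k.castSucc + x.1 k.succ := by
  have hodd := qubitChangeFun_apply_odd x k.castSucc
  have heven := qubitChangeFun_apply_even x k.succ
  simp only [Fin.val_castSucc, Fin.val_succ, Fin.succ_castSucc, mul_add, mul_one] at hodd heven
  rw [hodd, heven]
  omega

lemma qubitChangeFun_apply_odd_add_even_last {M : ℕ}
    (x : (Fin (M + 1) → Fin 2) × Sector (M + 1)) :
    qubitChangeFun (M + 1) x ⟨2 * M + 1, by omega⟩ +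
        qubitChangeFun (M + 1) x ⟨2 * M + 2, by omega⟩ =
      x.1 (Fin.last M) + x.2.2.1 := by
  have hodd := qubitChangeFun_apply_odd x (Fin.last M)
  have htwo := qubitChangeFun_apply_two_mul x
  simp only [Fin.val_last, Fin.succ_last, Nat.succ_eq_add_one, mul_add, mul_one] at hodd htwo
  rw [hodd, htwo]
  omega

lemma qubitChangeFun_apply_last_add_zero {M : ℕ} (x : (Fin (M + 1) → Fin 2) × Sector (M + 1)) :
    qubitChangeFun (M + 1) x ⟨2 * (M + 1) + 1, by omega⟩ + qubitChangeFun (M + 1) x ⟨0, by omega⟩ =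
      x.1 0 := by
  have heven := qubitChangeFun_apply_even x 0
  simp only [Fin.val_zero, mul_zero, Fin.castSucc_zero, Fin.partialSum_zero, add_zero] at heven
  rw [qubitChangeFun_apply_last x ⟨2 * (M + 1) + 1, by omega⟩ rfl, heven]
  omega

end QubitChange

noncomputable def qubitChange (N : ℕ) :
    (Fin N → Fin 2) × Sector N ≃+ (Fin (2 * N + 2) → Fin 2) :=
  AddEquiv.ofBijective (AddMonoidHom.mk' (qubitChangeFun N) (qubitChangeFun_add N)) <| by
    rw [Fintype.bijective_iff_injective_and_card]
    refine ⟨(injective_iff_map_eq_zero _).mpr fun x => eq_zero_of_qubitChangeFun_eq_zero x, ?_⟩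
    simp only [Fintype.card_prod, Fintype.card_fun, Fintype.card_fin]
    ring

@[simp]
lemma qubitChange_apply {N : ℕ} (x : (Fin N → Fin 2) × Sector N) :
    qubitChange N x = qubitChangeFun N x :=
  rfl

section Hamiltonians

/-- `H_p` for `N = M + 1`. -/
noncomputable def penaltyHamiltonian (M : ℕ) :
    Matrix (Fin (2 * (M + 1) + 2) → Fin 2) (Fin (2 * (M + 1) + 2) → Fin 2) ℂ :=
  -((∑ i : Fin (M + 2),
      pauliAt pauliX ⟨2 * (i : ℕ), by omega⟩ * pauliAt pauliX ⟨2 * (i : ℕ) + 1, by omega⟩) +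
    (∑ i : Fin (M + 1),
      pauliAt pauliZ ⟨2 * (i : ℕ) + 1, by omega⟩ * pauliAt pauliZ ⟨2 * (i : ℕ) + 2, by omega⟩) +
    pauliAt pauliZ ⟨2 * (M + 1) + 1, by omega⟩ * pauliAt pauliZ ⟨0, by omega⟩)

/-- `H(sx, sz)` on `N = M + 1` qubits. -/
noncomputable def chainHamiltonian (M : ℕ) (sx sz : ℝ) :
    Matrix (Fin (M + 1) → Fin 2) (Fin (M + 1) → Fin 2) ℂ :=
  -((∑ i, pauliAt pauliX i) + (sx : ℂ) • (List.ofFn fun i : Fin (M + 1) => pauliAt pauliX i).prod +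
    pauliAt pauliZ 0 + (∑ i : Fin M, pauliAt pauliZ i.castSucc * pauliAt pauliZ i.succ) +
    (sz : ℂ) • pauliAt pauliZ (Fin.last M))

/-- `chainHamiltonian M sx sz` with the couplings `sx`, `sz` promoted to operators `Y`, `Z` on an
auxiliary space `ι`. -/
noncomputable def couplingHamiltonian (M : ℕ) {ι : Type*} [DecidableEq ι] (Y Z : Matrix ι ι ℂ) :
    Matrix ((Fin (M + 1) → Fin 2) × ι) ((Fin (M + 1) → Fin 2) × ι) ℂ :=
  -((∑ i, pauliAt pauliX i) ⊗ₖ 1 + (List.ofFn fun i : Fin (M + 1) => pauliAt pauliX i).prod ⊗ₖ Y +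
    pauliAt pauliZ 0 ⊗ₖ 1 + (∑ i : Fin M, pauliAt pauliZ i.castSucc * pauliAt pauliZ i.succ) ⊗ₖ 1 +
    pauliAt pauliZ (Fin.last M) ⊗ₖ Z)

variable {M : ℕ} {ι : Type*} [DecidableEq ι]

lemma blockDiagonal_chainHamiltonian (y z : ι → ℝ) :
    blockDiagonal (fun s => chainHamiltonian M (y s) (z s)) =
      couplingHamiltonian M (diagonal fun s => (y s : ℂ)) (diagonal fun s => (z s : ℂ)) := by
  simp only [chainHamiltonian, couplingHamiltonian, blockDiagonal_fun_neg, blockDiagonal_fun_add,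
    blockDiagonal_const, blockDiagonal_smul_const]

lemma couplingHamiltonian_mul_one_kronecker [Fintype ι] {Y Y' Z K : Matrix ι ι ℂ}
    (hY : Y * K = K * Y') (hZ : Commute Z K) :
    couplingHamiltonian M Y Z * (1 ⊗ₖ K) = (1 ⊗ₖ K) * couplingHamiltonian M Y' Z := by
  simp only [couplingHamiltonian, neg_mul, mul_neg, add_mul, mul_add, ← mul_kronecker_mul,
    one_mul, mul_one, hY, hZ.eq]

end Hamiltonians

section Pullback

variable {M : ℕ}

local notation "σ" => qubitChange (M + 1)

lemma submatrix_pauliX_pair (k : Fin (M + 1)) :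
    (pauliAt pauliX ⟨2 * k, by omega⟩ * pauliAt pauliX ⟨2 * k + 1, by omega⟩).submatrix σ σ =
      pauliAt pauliX k ⊗ₖ 1 := by
  rw [pauliAt_pauliX, pauliAt_pauliX, translationMatrix_mul, ← qubitChangeFun_single,
    ← qubitChange_apply, submatrix_translationMatrix, translationMatrix_prod,
    translationMatrix_zero, pauliAt_pauliX]

lemma submatrix_pauliX_pair_last :
    (pauliAt pauliX ⟨2 * (M + 1), by omega⟩ *
        pauliAt pauliX ⟨2 * (M + 1) + 1, by omega⟩).submatrix σ σ =
      (List.ofFn fun i : Fin (M + 1) => pauliAt pauliX i).prod ⊗ₖ translationMatrix (1, 0) := by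
  rw [pauliAt_pauliX, pauliAt_pauliX, translationMatrix_mul, ← qubitChangeFun_one_one,
    ← qubitChange_apply, submatrix_translationMatrix, translationMatrix_prod,
    list_prod_ofFn_pauliAt_pauliX]

lemma submatrix_pauliZ_pair (k : Fin M) :
    (pauliAt pauliZ ⟨2 * k + 1, by omega⟩ * pauliAt pauliZ ⟨2 * k + 2, by omega⟩).submatrix σ σ =
      (pauliAt pauliZ k.castSucc * pauliAt pauliZ k.succ) ⊗ₖ 1 := by
  rw [pauliAt_pauliZ_mul_pauliAt_pauliZ, submatrix_diagonal _ _ (qubitChange _).injective,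
    pauliAt_pauliZ_mul_pauliAt_pauliZ, ← diagonal_comp_fst]
  simp only [Function.comp_def, qubitChange_apply, qubitChangeFun_apply_odd_add_even]

lemma submatrix_pauliZ_pair_last :
    (pauliAt pauliZ ⟨2 * M + 1, by omega⟩ * pauliAt pauliZ ⟨2 * M + 2, by omega⟩).submatrix σ σ =
      pauliAt pauliZ (Fin.last M) ⊗ₖ diagonal fun s : Sector (M + 1) => (bitSign s.2.1 : ℂ) := by
  rw [pauliAt_pauliZ_mul_pauliAt_pauliZ, submatrix_diagonal _ _ (qubitChange _).injective,
    pauliAt_pauliZ, diagonal_kronecker_diagonal]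
  simp only [Function.comp_def, qubitChange_apply, qubitChangeFun_apply_odd_add_even_last]
  simp only [bitSign_add, Complex.ofReal_mul]

lemma submatrix_pauliZ_pair_wrap :
    (pauliAt pauliZ ⟨2 * (M + 1) + 1, by omega⟩ * pauliAt pauliZ ⟨0, by omega⟩).submatrix σ σ =
      pauliAt pauliZ 0 ⊗ₖ 1 := by
  rw [pauliAt_pauliZ_mul_pauliAt_pauliZ, submatrix_diagonal _ _ (qubitChange _).injective,
    pauliAt_pauliZ, ← diagonal_comp_fst]
  simp only [Function.comp_def, qubitChange_apply, qubitChangeFun_apply_last_add_zero]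

lemma submatrix_sum_pauliX_pairs :
    (∑ i : Fin (M + 2), pauliAt pauliX ⟨2 * (i : ℕ), by omega⟩ *
        pauliAt pauliX ⟨2 * (i : ℕ) + 1, by omega⟩).submatrix σ σ =
      (∑ i, pauliAt pauliX i) ⊗ₖ 1 +
        (List.ofFn fun i : Fin (M + 1) => pauliAt pauliX i).prod ⊗ₖ translationMatrix (1, 0) := by
  rw [submatrix_sum, Fin.sum_univ_castSucc, sum_kronecker]
  simp only [Fin.val_castSucc, Fin.val_last, submatrix_pauliX_pair, submatrix_pauliX_pair_last]

lemma submatrix_sum_pauliZ_pairs :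
    (∑ i : Fin (M + 1), pauliAt pauliZ ⟨2 * (i : ℕ) + 1, by omega⟩ *
        pauliAt pauliZ ⟨2 * (i : ℕ) + 2, by omega⟩).submatrix σ σ =
      (∑ i : Fin M, pauliAt pauliZ i.castSucc * pauliAt pauliZ i.succ) ⊗ₖ 1 +
        pauliAt pauliZ (Fin.last M) ⊗ₖ diagonal fun s : Sector (M + 1) => (bitSign s.2.1 : ℂ) := by
  rw [submatrix_sum, Fin.sum_univ_castSucc, sum_kronecker]
  simp only [Fin.val_castSucc, Fin.val_last, submatrix_pauliZ_pair, submatrix_pauliZ_pair_last]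

lemma submatrix_penaltyHamiltonian :
    (penaltyHamiltonian M).submatrix σ σ = couplingHamiltonian M (translationMatrix (1, 0))
      (diagonal fun s : Sector (M + 1) => (bitSign s.2.1 : ℂ)) := by
  rw [penaltyHamiltonian, submatrix_neg, submatrix_add, submatrix_add]
  simp only [Pi.neg_apply, Pi.add_apply]
  rw [submatrix_sum_pauliX_pairs, submatrix_sum_pauliZ_pairs, submatrix_pauliZ_pair_wrap,
    couplingHamiltonian]
  abel

end Pullback

section Hadamard

def hadamardGate : Matrix (Fin 2) (Fin 2) ℂ := !![1, 1; 1, -1]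

lemma pauliX_mul_hadamardGate : pauliX * hadamardGate = hadamardGate * pauliZ := by
  ext i j
  fin_cases i <;> fin_cases j <;> simp [pauliX, pauliZ, hadamardGate, mul_apply, Fin.sum_univ_two]

lemma isUnit_hadamardGate : IsUnit hadamardGate := by
  rw [isUnit_iff_isUnit_det, hadamardGate, det_fin_two_of, isUnit_iff_ne_zero]
  norm_num

variable {β : Type*} [Fintype β] [DecidableEq β]

lemma translationMatrix_one_zero_mul_hadamardGate [AddZeroClass β] :
    (translationMatrix ((1, 0) : Fin 2 × β) : Matrix _ _ ℂ) * (hadamardGate ⊗ₖ 1) =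
      (hadamardGate ⊗ₖ 1) * diagonal fun s => (bitSign s.1 : ℂ) := by
  rw [translationMatrix_prod, translationMatrix_zero, ← pauliX_eq_translationMatrix,
    diagonal_comp_fst fun a => (bitSign a : ℂ), ← pauliZ_eq_diagonal, ← mul_kronecker_mul,
    ← mul_kronecker_mul, pauliX_mul_hadamardGate]

lemma commute_diagonal_snd_hadamardGate (d : β → ℂ) :
    Commute (diagonal fun s : Fin 2 × β => d s.2) (hadamardGate ⊗ₖ 1) := by
  rw [diagonal_comp_snd, Commute, SemiconjBy, ← mul_kronecker_mul, ← mul_kronecker_mul]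
  simp

lemma spectrum_couplingHamiltonian_hadamardGate [AddZeroClass β] {M : ℕ} (d : β → ℂ) :
    spectrum ℂ (couplingHamiltonian M (translationMatrix ((1, 0) : Fin 2 × β))
        (diagonal fun s => d s.2)) =
      spectrum ℂ (couplingHamiltonian M (diagonal fun s : Fin 2 × β => (bitSign s.1 : ℂ))
        (diagonal fun s => d s.2)) :=
  spectrum_eq_of_mul_eq_mul (isUnit_kronecker isUnit_one
      (isUnit_kronecker isUnit_hadamardGate isUnit_one))
    (couplingHamiltonian_mul_one_kronecker translationMatrix_one_zero_mul_hadamardGate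
      (commute_diagonal_snd_hadamardGate d))

end Hadamard

lemma iUnion_bitSign {β δ : Type*} [Nonempty β] (S : ℝ → ℝ → Set δ) :
    ⋃ s : Fin 2 × Fin 2 × β, S (bitSign s.1) (bitSign s.2.1) =
      ⋃ sx ∈ ({-1, 1} : Set ℝ), ⋃ sz ∈ ({-1, 1} : Set ℝ), S sx sz := by
  rw [← range_bitSign]
  ext
  simp

theorem spectrum_penaltyHamiltonian (M : ℕ) :
    spectrum ℂ (penaltyHamiltonian M) =
      ⋃ sx ∈ ({-1, 1} : Set ℝ), ⋃ sz ∈ ({-1, 1} : Set ℝ), spectrum ℂ (chainHamiltonian M sx sz) :=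
  calc spectrum ℂ (penaltyHamiltonian M)
      = spectrum ℂ (couplingHamiltonian M (translationMatrix (1, 0))
          (diagonal fun s : Sector (M + 1) => (bitSign s.2.1 : ℂ))) := by
        rw [← submatrix_penaltyHamiltonian, spectrum_submatrix_equiv]
    _ = spectrum ℂ (couplingHamiltonian M (diagonal fun s : Sector (M + 1) => (bitSign s.1 : ℂ))
          (diagonal fun s => (bitSign s.2.1 : ℂ))) :=
        spectrum_couplingHamiltonian_hadamardGate (β := Fin 2 × (Fin (M + 1) → Fin 2))
          fun p => (bitSign p.1 : ℂ)
    _ = ⋃ s : Sector (M + 1), spectrum ℂ (chainHamiltonian M (bitSign s.1) (bitSign s.2.1)) := by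
        rw [← blockDiagonal_chainHamiltonian, spectrum_blockDiagonal]
    _ = _ := iUnion_bitSign fun sx sz => spectrum ℂ (chainHamiltonian M sx sz)

end

/-- The spectrum of the `(2N+2)`-qubit penalty Hamiltonian
`H_p = -(Σ_{i=1}^{N+1} X_{2i-1}X_{2i} + Σ_{i=1}^N Z_{2i}Z_{2i+1} + Z_{2N+2}Z₁)` is the
union, over the four sign choices `s_x, s_z ∈ {-1,+1}`, of the spectra of the
`N`-qubit Hamiltonians
`H(s_x,s_z) = -(Σ_{i=1}^N X_i + s_x·X₁⋯X_N + Z₁ + Σ_{i=1}^{N-1} Z_iZ_{i+1} + s_z·Z_N)`. -/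
theorem penalty_spectrum_as_union_of_sectors
    (N : ℕ) (hN : 1 ≤ N)
    (Hp : Matrix (Fin (2 * N + 2) → Fin 2) (Fin (2 * N + 2) → Fin 2) ℂ)
    (hHpdef : Hp =
      -((∑ i : Fin (N + 1),
          pauliAt pauliX ⟨2 * (i : ℕ), by have := i.isLt; omega⟩ *
          pauliAt pauliX ⟨2 * (i : ℕ) + 1, by have := i.isLt; omega⟩) +
        (∑ i : Fin N,
          pauliAt pauliZ ⟨2 * (i : ℕ) + 1, by have := i.isLt; omega⟩ *
          pauliAt pauliZ ⟨2 * (i : ℕ) + 2, by have := i.isLt; omega⟩) +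
        pauliAt pauliZ ⟨2 * N + 1, by omega⟩ * pauliAt pauliZ ⟨0, by omega⟩))
    (H : ℝ → ℝ → Matrix (Fin N → Fin 2) (Fin N → Fin 2) ℂ)
    (hHdef : ∀ sx sz : ℝ, H sx sz =
      -((∑ i : Fin N, pauliAt pauliX i) +
        ((sx : ℝ) : ℂ) • (List.ofFn fun i : Fin N => pauliAt pauliX i).prod +
        pauliAt pauliZ ⟨0, by omega⟩ +
        (∑ i : Fin (N - 1),
          pauliAt pauliZ ⟨(i : ℕ), by have := i.isLt; omega⟩ *
          pauliAt pauliZ ⟨(i : ℕ) + 1, by have := i.isLt; omega⟩) +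
        ((sz : ℝ) : ℂ) • pauliAt pauliZ ⟨N - 1, by omega⟩)) :
    spectrum ℂ Hp =
      ⋃ sx ∈ ({-1, 1} : Set ℝ), ⋃ sz ∈ ({-1, 1} : Set ℝ), spectrum ℂ (H sx sz) := by
  obtain ⟨M, rfl⟩ : ∃ M, N = M + 1 := ⟨N - 1, by omega⟩
  obtain rfl : H = chainHamiltonian M := funext₂ hHdef
  obtain rfl : Hp = penaltyHamiltonian M := hHpdef
  exact spectrum_penaltyHamiltonian M
end
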